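/- arXiv:1311.4685 — 5 statements merged into one kernel-verified Lean document; each statement's English description precedes it below -/
import Mathlib

section
/- (Pietsch-Domination type theorem) Let 1 ≤ p < ∞. A continuous n-linear operator T : X_1 × ⋯ × X_n → Y between Banach spaces is factorable strongly p-summing if and only if there exist a constant C ≥ 0 and a regular Borel probability measure μ on the closed unit ball B of the space of continuous n-linear functionals φ : X_1 × ⋯ × X_n → 𝕂, endowed with the topology of pointwise convergence (the weak-star topology under the identification of this space with the dual of the completed projective tensor product X_1 ⊗̂_π ⋯ ⊗̂_π X_n), such that for every m ∈ ℕ, all x_k^i ∈ X_k and all scalars λ^i (1 ≤ i ≤ m), ‖∑_{i=1}^m λ^i T(x_1^i, …, x_n^i)‖ ≤ C · (∫_B |∑_{i=1}^m λ^i φ(x_1^i, …, x_n^i)|^p dμ(φ))^{1/p}. -/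
/-!
Domination implies the summing inequality by integrating the row inequalities
`‖∑ λᵢ T xᵢ‖ ^ p ≤ C ^ p ∫ |∑ λᵢ φ xᵢ| ^ p dμ` and bounding the integral of their sum by its maximum
over the ball.

Conversely (Pietsch's argument), the ball is compact for pointwise convergence. For a row
`u = ∑ λᵢ [xᵢ]` the function `φ ↦ ‖∑ λᵢ T xᵢ‖ ^ p - C ^ p |∑ λᵢ φ xᵢ| ^ p` is nonpositive somewhere,
and since rescaling a row by `t ^ (1 / p)` rescales this function by `t`, the summing inequality
says the same for convex combinations of such functions. Separating their convex hull from the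
strictly positive functions gives a normalized positive functional on `C(B, ℝ)` which is
nonpositive on all of them, and the Riesz–Markov–Kakutani theorem represents it by a regular
probability measure.
-/

open scoped BigOperators
open MeasureTheory

noncomputable section

section Defs

variable (𝕜 : Type*) [RCLike 𝕜]

section Multi

variable {n : ℕ} {X : Fin n → Type*} {Y : Type*}
  [∀ k, NormedAddCommGroup (X k)] [∀ k, NormedSpace 𝕜 (X k)]
  [NormedAddCommGroup Y] [NormedSpace 𝕜 Y]

/-- `C` witnesses the defining inequality of factorable strongly `p`-summing
multilinear operators. -/
def FactStronglySummingBound (p : ℝ) (T : ContinuousMultilinearMap 𝕜 X Y) (C : ℝ) : Prop :=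
  0 ≤ C ∧ ∀ (m₁ m₂ : ℕ) (x : Fin m₁ → Fin m₂ → (∀ k, X k)) (lam : Fin m₁ → Fin m₂ → 𝕜),
    (∑ j, ‖∑ i, lam j i • T (x j i)‖ ^ p) ^ (1 / p) ≤
      C * ⨆ φ : {φ : ContinuousMultilinearMap 𝕜 X 𝕜 // ‖φ‖ ≤ 1},
        (∑ j, ‖∑ i, lam j i • φ.1 (x j i)‖ ^ p) ^ (1 / p)

/-- Factorable strongly `p`-summing continuous multilinear operators. -/
def FactStronglySumming (p : ℝ) (T : ContinuousMultilinearMap 𝕜 X Y) : Prop :=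
  ∃ C, FactStronglySummingBound 𝕜 p T C

/-- The factorable strongly `p`-summing norm `‖T‖_{FSt,p}` (the least admissible constant). -/
def fstMultiNorm (p : ℝ) (T : ContinuousMultilinearMap 𝕜 X Y) : ℝ :=
  sInf {C | FactStronglySummingBound 𝕜 p T C}

/-- Strongly `p`-summing continuous multilinear operators (Dimant). -/
def StronglySumming (p : ℝ) (T : ContinuousMultilinearMap 𝕜 X Y) : Prop :=
  ∃ C : ℝ, 0 ≤ C ∧ ∀ (m : ℕ) (x : Fin m → (∀ k, X k)),
    (∑ j, ‖T (x j)‖ ^ p) ^ (1 / p) ≤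
      C * ⨆ φ : {φ : ContinuousMultilinearMap 𝕜 X 𝕜 // ‖φ‖ ≤ 1},
        (∑ j, ‖φ.1 (x j)‖ ^ p) ^ (1 / p)

/-- Factorable `p`-dominated continuous multilinear operators. -/
def FactorablePDominated (p : ℝ) (T : ContinuousMultilinearMap 𝕜 X Y) : Prop :=
  ∃ C : ℝ, 0 ≤ C ∧ ∀ (m₁ m₂ : ℕ) (x : Fin m₁ → Fin m₂ → (∀ k, X k))
    (lam : Fin m₁ → Fin m₂ → 𝕜),
    (∑ j, ‖∑ i, lam j i • T (x j i)‖ ^ p) ^ (1 / p) ≤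
      C * ⨆ φ : ∀ k, {f : X k →L[𝕜] 𝕜 // ‖f‖ ≤ 1},
        (∑ j, ‖∑ i, lam j i • ∏ k, (φ k).1 (x j i k)‖ ^ p) ^ (1 / p)

/-- `p`-semi-integral continuous multilinear operators. -/
def PSemiIntegral (p : ℝ) (T : ContinuousMultilinearMap 𝕜 X Y) : Prop :=
  ∃ C : ℝ, 0 ≤ C ∧ ∀ (m : ℕ) (x : Fin m → (∀ k, X k)),
    (∑ j, ‖T (x j)‖ ^ p) ^ (1 / p) ≤
      C * ⨆ φ : ∀ k, {f : X k →L[𝕜] 𝕜 // ‖f‖ ≤ 1},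
        (∑ j, ‖∏ k, (φ k).1 (x j k)‖ ^ p) ^ (1 / p)

end Multi

section Poly

variable {X Y : Type*} [NormedAddCommGroup X] [NormedSpace 𝕜 X]
  [NormedAddCommGroup Y] [NormedSpace 𝕜 Y]

/-- `P` is a continuous `m`-homogeneous polynomial: the diagonal of a continuous
`m`-linear map. -/
def IsHomogPoly (m : ℕ) (P : X → Y) : Prop :=
  ∃ T : ContinuousMultilinearMap 𝕜 (fun _ : Fin m => X) Y, ∀ x, P x = T (fun _ => x)

/-- Sup norm of a (homogeneous polynomial) map on the closed unit ball. -/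
def polyNorm (P : X → Y) : ℝ :=
  ⨆ x : {x : X // ‖x‖ ≤ 1}, ‖P x.1‖

/-- `C` witnesses the defining inequality of factorable strongly `p`-summing
`m`-homogeneous polynomials. -/
def FactStronglySummingPolyBound (m : ℕ) (p : ℝ) (P : X → Y) (C : ℝ) : Prop :=
  0 ≤ C ∧ ∀ (m₁ m₂ : ℕ) (x : Fin m₁ → Fin m₂ → X) (lam : Fin m₁ → Fin m₂ → 𝕜),
    (∑ j, ‖∑ i, lam j i • P (x j i)‖ ^ p) ^ (1 / p) ≤
      C * ⨆ q : {q : X → 𝕜 // IsHomogPoly 𝕜 m q ∧ polyNorm q ≤ 1},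
        (∑ j, ‖∑ i, lam j i • q.1 (x j i)‖ ^ p) ^ (1 / p)

/-- Factorable strongly `p`-summing `m`-homogeneous polynomials. -/
def FactStronglySummingPoly (m : ℕ) (p : ℝ) (P : X → Y) : Prop :=
  IsHomogPoly 𝕜 m P ∧ ∃ C, FactStronglySummingPolyBound 𝕜 m p P C

/-- The factorable strongly `p`-summing norm `‖P‖_{FSt,p}` of a polynomial. -/
def fstPolyNorm (m : ℕ) (p : ℝ) (P : X → Y) : ℝ :=
  sInf {C | FactStronglySummingPolyBound 𝕜 m p P C}

/-- `C` witnesses the defining inequality of absolutely `p`-summing linear operators. -/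
def AbsSummingBound (p : ℝ) (u : X →L[𝕜] Y) (C : ℝ) : Prop :=
  0 ≤ C ∧ ∀ (m : ℕ) (x : Fin m → X),
    (∑ j, ‖u (x j)‖ ^ p) ^ (1 / p) ≤
      C * ⨆ φ : {φ : X →L[𝕜] 𝕜 // ‖φ‖ ≤ 1}, (∑ j, ‖φ.1 (x j)‖ ^ p) ^ (1 / p)

/-- Absolutely `p`-summing continuous linear operators. -/
def AbsolutelySumming (p : ℝ) (u : X →L[𝕜] Y) : Prop :=
  ∃ C, AbsSummingBound 𝕜 p u C

/-- The absolutely `p`-summing norm `π_p(u)` (the least admissible constant). -/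
def piSummingNorm (p : ℝ) (u : X →L[𝕜] Y) : ℝ :=
  sInf {C | AbsSummingBound 𝕜 p u C}

end Poly

end Defs

end
/-- The closed unit ball of the space of continuous `n`-linear functionals on
`X 1 × ⋯ × X n`, endowed (below) with the topology of pointwise convergence and its
Borel σ-algebra. -/
def MultBall (𝕜 : Type*) [RCLike 𝕜] {n : ℕ} (X : Fin n → Type*)
    [∀ k, NormedAddCommGroup (X k)] [∀ k, NormedSpace 𝕜 (X k)] : Type _ :=
  {φ : ContinuousMultilinearMap 𝕜 X 𝕜 // ‖φ‖ ≤ 1}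

variable {𝕜 : Type*} [RCLike 𝕜] {n : ℕ} {X : Fin n → Type*}
  [∀ k, NormedAddCommGroup (X k)] [∀ k, NormedSpace 𝕜 (X k)]

/-- The topology of pointwise convergence on the ball of multilinear functionals. -/
instance : TopologicalSpace (MultBall 𝕜 X) :=
  TopologicalSpace.induced
    (fun (φ : {φ : ContinuousMultilinearMap 𝕜 X 𝕜 // ‖φ‖ ≤ 1}) (x : ∀ k, X k) => φ.1 x)
    Pi.topologicalSpace

instance : MeasurableSpace (MultBall 𝕜 X) := borel _

instance : BorelSpace (MultBall 𝕜 X) := ⟨rfl⟩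

lemma nonpos_of_forall_pos_mul_lt {a u : ℝ} (h : ∀ t : ℝ, 0 < t → t * a < u) : a ≤ 0 := by
  by_contra! ha
  have := h ((|u| + 1) / a) (by positivity)
  rw [div_mul_cancel₀ _ ha.ne'] at this
  linarith [le_abs_self u]

lemma nonneg_of_forall_pos_mul_lt {a u : ℝ} (h : ∀ t : ℝ, 0 < t → t * a < u) : 0 ≤ u := by
  by_contra! hu
  have ha : a < 0 := by linarith [h 1 one_pos]
  have := h (u / (2 * a)) (div_pos_of_neg_of_neg hu (by linarith))
  rw [div_mul_eq_mul_div, mul_div_mul_right _ _ ha.ne] at this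
  linarith

lemma rpow_one_div_le_mul_rpow_one_div_iff {a b C p : ℝ} (ha : 0 ≤ a) (hb : 0 ≤ b) (hC : 0 ≤ C)
    (hp : 0 < p) : a ^ (1 / p) ≤ C * b ^ (1 / p) ↔ a ≤ C ^ p * b := by
  rw [← Real.rpow_le_rpow_iff (Real.rpow_nonneg ha _) (by positivity) hp, ← Real.rpow_mul ha,
    Real.mul_rpow hC (Real.rpow_nonneg hb _), ← Real.rpow_mul hb, one_div_mul_cancel hp.ne',
    Real.rpow_one, Real.rpow_one]

lemma Finsupp.exists_fin_eq_sum_single {ι α M : Type*} [Fintype ι] [AddCommMonoid M]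
    (u : ι → α →₀ M) :
    ∃ (m : ℕ) (x : Fin m → α) (c : ι → Fin m → M), ∀ j, u j = ∑ i, single (x i) (c j i) := by
  classical
  let s := Finset.univ.biUnion fun j => (u j).support
  refine ⟨s.card, fun i => s.equivFin.symm i, fun j i => u j (s.equivFin.symm i), fun j => ?_⟩
  rw [Equiv.sum_comp s.equivFin.symm (fun v => single v.1 (u j v)),
    Finset.sum_coe_sort s fun v => single v (u j v)]
  conv_lhs => rw [← (u j).sum_single]
  exact (u j).sum_of_support_subset
    (Finset.subset_biUnion_of_mem (fun j => (u j).support) (Finset.mem_univ j)) _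
    fun _ _ => single_zero _

section CompactSpace

open scoped CompactlySupported

variable {K : Type*} [TopologicalSpace K]

lemma ContinuousMap.convex_setOf_forall_pos : Convex ℝ {f : C(K, ℝ) | ∀ x, 0 < f x} :=
  fun _ hf _ hg _ _ ha hb hab x => convex_Ioi (0 : ℝ) (hf x) (hg x) ha hb hab

variable [CompactSpace K]

lemma ContinuousMap.isOpen_setOf_forall_pos : IsOpen {f : C(K, ℝ) | ∀ x, 0 < f x} := by
  simpa [Set.MapsTo] using ContinuousMap.isOpen_setOfPred_mapsTo isCompact_univ isOpen_Ioi

/-- Separate `S` from the open cone of strictly positive functions (Hahn–Banach). -/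
theorem exists_positiveLinearMap_nonpos_on {S : Set C(K, ℝ)} (hS : Convex ℝ S)
    (hS_ne : S.Nonempty) (hS_nonpos : ∀ f ∈ S, ∃ x, f x ≤ 0) :
    ∃ Λ : C(K, ℝ) →ₚ[ℝ] ℝ, Λ 1 = 1 ∧ ∀ f ∈ S, Λ f ≤ 0 := by
  have hPS : Disjoint {f : C(K, ℝ) | ∀ x, 0 < f x} S := Set.disjoint_left.2 fun f hfP hfS => by
    obtain ⟨x, hx⟩ := hS_nonpos f hfS
    exact (hfP x).not_ge hx
  obtain ⟨L, u, hLP, hLS⟩ := geometric_hahn_banach_open ContinuousMap.convex_setOf_forall_pos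
    ContinuousMap.isOpen_setOf_forall_pos hS hPS
  have hu : 0 ≤ u := nonneg_of_forall_pos_mul_lt fun t ht => by
    simpa using hLP (t • 1) fun _ => by simpa using ht
  have hL_pos (f : C(K, ℝ)) (hf : 0 ≤ f) : L f ≤ 0 := by
    refine nonpos_of_forall_pos_mul_lt (u := u - L 1) fun t ht => ?_
    have := hLP (t • f + 1) fun x => by
      simpa using add_pos_of_nonneg_of_pos (mul_nonneg ht.le (hf x)) one_pos
    simp only [map_add, map_smul, smul_eq_mul] at this
    linarith
  have hL1 : L 1 < 0 := by
    refine (hL_pos 1 zero_le_one).lt_of_ne fun h1 => ?_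
    obtain ⟨b, hb⟩ := hS_ne
    have hb_bdd : 0 ≤ b + ‖b‖ • 1 := ContinuousMap.le_def.2 fun x => by
      simpa [neg_le_iff_add_nonneg] using neg_le_of_abs_le (b.norm_coe_le_norm x)
    have := hL_pos _ hb_bdd
    simp only [map_add, map_smul, h1, smul_zero, add_zero] at this
    linarith [hLP 1 fun _ => one_pos, hLS b hb]
  refine ⟨PositiveLinearMap.mk₀ ((L 1)⁻¹ • L.toLinearMap) fun f hf => ?_, ?_, fun f hf => ?_⟩
  · exact mul_nonneg_of_nonpos_of_nonpos (inv_nonpos.2 hL1.le) (hL_pos f hf)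
  · exact inv_mul_cancel₀ hL1.ne
  · exact mul_nonpos_of_nonpos_of_nonneg (inv_nonpos.2 hL1.le) (hu.trans (hLS f hf))

variable [T2Space K] [MeasurableSpace K] [BorelSpace K]

theorem exists_regular_isProbabilityMeasure_integral_eq (Λ : C(K, ℝ) →ₚ[ℝ] ℝ) (hΛ : Λ 1 = 1) :
    ∃ μ : Measure K, IsProbabilityMeasure μ ∧ μ.Regular ∧ ∀ f : C(K, ℝ), ∫ x, f x ∂μ = Λ f := by
  let Λc : C_c(K, ℝ) →ₚ[ℝ] ℝ :=
    { toFun f := Λ f.toContinuousMap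
      map_add' f g := map_add Λ _ _
      map_smul' c f := map_smul Λ c _
      monotone' f g hfg := Λ.monotone' hfg }
  have hint (f : C(K, ℝ)) : ∫ x, f x ∂(RealRMK.rieszMeasure Λc) = Λ f :=
    RealRMK.integral_rieszMeasure Λc (CompactlySupportedContinuousMap.continuousMapEquiv f)
  refine ⟨RealRMK.rieszMeasure Λc, isProbabilityMeasure_iff_real.2 ?_, inferInstance, hint⟩
  simpa [hΛ] using hint 1

/-- A minimax principle in the spirit of Ky Fan. -/
theorem exists_regular_isProbabilityMeasure_integral_nonpos {S : Set C(K, ℝ)}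
    (hS : Convex ℝ S) (hS_ne : S.Nonempty) (hS_nonpos : ∀ f ∈ S, ∃ x, f x ≤ 0) :
    ∃ μ : Measure K, IsProbabilityMeasure μ ∧ μ.Regular ∧ ∀ f ∈ S, ∫ x, f x ∂μ ≤ 0 := by
  obtain ⟨Λ, hΛ1, hΛS⟩ := exists_positiveLinearMap_nonpos_on hS hS_ne hS_nonpos
  obtain ⟨μ, hμ, hreg, hint⟩ := exists_regular_isProbabilityMeasure_integral_eq Λ hΛ1
  exact ⟨μ, hμ, hreg, fun f hf => (hint f).trans_le (hΛS f hf)⟩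

end CompactSpace

namespace MultBall

open Function Topology

lemma injective_coeFn :
    Injective fun φ : MultBall 𝕜 X => (φ.1 : (∀ k, X k) → 𝕜) :=
  fun _ _ h => Subtype.ext (ContinuousMultilinearMap.ext (congrFun h))

lemma isEmbedding_coeFn :
    IsEmbedding fun φ : MultBall 𝕜 X => (φ.1 : (∀ k, X k) → 𝕜) :=
  ⟨⟨rfl⟩, injective_coeFn⟩

@[fun_prop]
lemma continuous_apply (x : ∀ k, X k) : Continuous fun φ : MultBall 𝕜 X => φ.1 x :=
  (_root_.continuous_apply x).comp isEmbedding_coeFn.continuous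

instance : T2Space (MultBall 𝕜 X) := isEmbedding_coeFn.t2Space

instance : Nonempty (MultBall 𝕜 X) := ⟨⟨0, by simp⟩⟩

lemma range_coeFn : Set.range (fun φ : MultBall 𝕜 X => (φ.1 : (∀ k, X k) → 𝕜)) =
    {g | (∀ x k (a b : X k), g (update x k (a + b)) = g (update x k a) + g (update x k b)) ∧
      (∀ x k (c : 𝕜) (a : X k), g (update x k (c • a)) = c • g (update x k a)) ∧
      ∀ x, ‖g x‖ ≤ ∏ k, ‖x k‖} := by
  ext g
  constructor
  · rintro ⟨φ, rfl⟩
    exact ⟨φ.1.map_update_add, φ.1.map_update_smul,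
      fun x => by simpa using φ.1.le_of_opNorm_le φ.2 x⟩
  · rintro ⟨hadd, hsmul, hbound⟩
    let L : MultilinearMap 𝕜 X 𝕜 :=
      { toFun := g
        map_update_add' x k a b := by convert hadd x k a b
        map_update_smul' x k c a := by convert hsmul x k c a }
    have hL : ∀ x, ‖L x‖ ≤ 1 * ∏ k, ‖x k‖ := fun x => by rw [one_mul]; exact hbound x
    exact ⟨⟨L.mkContinuous 1 hL, L.mkContinuous_norm_le zero_le_one hL⟩, rfl⟩

lemma isClosed_range_coeFn :
    IsClosed (Set.range fun φ : MultBall 𝕜 X => (φ.1 : (∀ k, X k) → 𝕜)) := by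
  simp only [range_coeFn, Set.ofPred_and, Set.ofPred_forall]
  refine .inter ?_ (.inter ?_ ?_)
  · exact isClosed_iInter fun x => isClosed_iInter fun k => isClosed_iInter fun a =>
      isClosed_iInter fun b => isClosed_eq (by fun_prop) (by fun_prop)
  · exact isClosed_iInter fun x => isClosed_iInter fun k => isClosed_iInter fun c =>
      isClosed_iInter fun a => isClosed_eq (by fun_prop) (by fun_prop)
  · exact isClosed_iInter fun x => isClosed_le (by fun_prop) continuous_const

/-- Banach–Alaoglu for multilinear functionals. -/
instance : CompactSpace (MultBall 𝕜 X) := by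
  rw [← isCompact_univ_iff, isEmbedding_coeFn.isCompact_iff, Set.image_univ]
  refine (isCompact_univ_pi fun x : ∀ k, X k =>
    isCompact_closedBall (0 : 𝕜) (∏ k, ‖x k‖)).of_isClosed_subset isClosed_range_coeFn ?_
  rintro _ ⟨φ, rfl⟩ x -
  simpa using φ.1.le_of_opNorm_le φ.2 x

lemma isGreatest_iSup {F : MultBall 𝕜 X → ℝ} (hF : Continuous F) :
    IsGreatest (Set.range F) (⨆ φ : {φ : ContinuousMultilinearMap 𝕜 X 𝕜 // ‖φ‖ ≤ 1}, F φ) :=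
  (isCompact_range hF).isGreatest_sSup (Set.range_nonempty F)

end MultBall

section Domination

variable {Y : Type*} [NormedAddCommGroup Y] [NormedSpace 𝕜 Y] {p C : ℝ}
  {T : ContinuousMultilinearMap 𝕜 X Y}

open Finsupp

/-- A row `∑ i, λ i • T (x i)` is encoded by the formal combination `u = ∑ i, λ i • [x i]`, so that
rows of different lengths can be rescaled and collected freely. -/
noncomputable def dominationDefect (p C : ℝ) (T : ContinuousMultilinearMap 𝕜 X Y)
    (u : (∀ k, X k) →₀ 𝕜) (φ : MultBall 𝕜 X) : ℝ :=
  ‖linearCombination 𝕜 T u‖ ^ p - C ^ p * ‖linearCombination 𝕜 φ.1 u‖ ^ p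

lemma continuous_linearCombination_apply (u : (∀ k, X k) →₀ 𝕜) :
    Continuous fun φ : MultBall 𝕜 X => linearCombination 𝕜 φ.1 u := by
  simp only [linearCombination_apply, Finsupp.sum]
  exact continuous_finsetSum _ fun x _ => (MultBall.continuous_apply x).const_smul (u x)

lemma continuous_dominationDefect (hp : 0 ≤ p) (u : (∀ k, X k) →₀ 𝕜) :
    Continuous (dominationDefect p C T u) :=
  continuous_const.sub <| continuous_const.mul <|
    (continuous_linearCombination_apply u).norm.rpow_const fun _ => Or.inr hp

lemma dominationDefect_smul (hp : 0 < p) {t : ℝ} (ht : 0 ≤ t) (u : (∀ k, X k) →₀ 𝕜) :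
    dominationDefect p C T (((t ^ (1 / p) : ℝ) : 𝕜) • u) = t • dominationDefect p C T u := by
  have ht' : (t ^ (1 / p)) ^ p = t := by rw [one_div, Real.rpow_inv_rpow ht hp.ne']
  ext φ
  simp only [dominationDefect, map_smul, norm_smul, norm_mul, RCLike.norm_ofReal,
    abs_of_nonneg (Real.rpow_nonneg ht _), Real.mul_rpow (Real.rpow_nonneg ht _) (norm_nonneg _),
    ht', Pi.smul_apply, smul_eq_mul]
  ring

lemma integral_dominationDefect (hp : 0 ≤ p) (μ : Measure (MultBall 𝕜 X))
    [IsProbabilityMeasure μ] (u : (∀ k, X k) →₀ 𝕜) :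
    ∫ φ, dominationDefect p C T u φ ∂μ =
      ‖linearCombination 𝕜 T u‖ ^ p - C ^ p * ∫ φ, ‖linearCombination 𝕜 φ.1 u‖ ^ p ∂μ := by
  have hint : Integrable (fun φ : MultBall 𝕜 X => ‖linearCombination 𝕜 φ.1 u‖ ^ p) μ :=
    ((continuous_linearCombination_apply u).norm.rpow_const fun _ => Or.inr hp)
      |>.integrable_of_hasCompactSupport (.of_compactSpace _)
  simp only [dominationDefect]
  rw [integral_sub (integrable_const _) (hint.const_mul _), integral_const,
    integral_const_mul, probReal_univ, one_smul]

lemma FactStronglySummingBound.exists_sum_dominationDefect_nonpos (hp : 0 < p)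
    (hC : FactStronglySummingBound 𝕜 p T C) {ι : Type*} [Fintype ι]
    (u : ι → (∀ k, X k) →₀ 𝕜) : ∃ φ, ∑ j, dominationDefect p C T (u j) φ ≤ 0 := by
  obtain ⟨m, x, c, hu⟩ := Finsupp.exists_fin_eq_sum_single u
  let e := (Fintype.equivFin ι).symm
  let G (φ : MultBall 𝕜 X) : ℝ := ∑ j, ‖∑ i, c (e j) i • φ.1 (x i)‖ ^ p
  have hG : Continuous G := by
    simp only [G]
    fun_prop (disch := exact hp.le)
  obtain ⟨⟨φ₀, hφ₀⟩, -⟩ := MultBall.isGreatest_iSup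
    (hG.rpow_const (p := 1 / p) fun _ => Or.inr (by positivity))
  have hbound := hC.2 _ m (fun _ i => x i) (fun j => c (e j))
  rw [← hφ₀, rpow_one_div_le_mul_rpow_one_div_iff (by positivity) (by positivity) hC.1 hp]
    at hbound
  refine ⟨φ₀, ?_⟩
  simp only [← e.sum_comp, dominationDefect, hu, map_sum, linearCombination_single,
    Finset.sum_sub_distrib, ← Finset.mul_sum]
  exact sub_nonpos.2 hbound

lemma FactStronglySummingBound.exists_nonpos_of_mem_convexHull (hp : 0 < p)
    (hC : FactStronglySummingBound 𝕜 p T C) {f : C(MultBall 𝕜 X, ℝ)}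
    (hf : f ∈ convexHull ℝ {g : C(MultBall 𝕜 X, ℝ) | ∃ u, ⇑g = dominationDefect p C T u}) :
    ∃ φ, f φ ≤ 0 := by
  obtain ⟨ι, _, w, g, hw, -, hg, rfl⟩ := mem_convexHull_iff_exists_fintype.1 hf
  choose u hu using hg
  obtain ⟨φ, hφ⟩ := hC.exists_sum_dominationDefect_nonpos hp
    fun i => ((w i ^ (1 / p) : ℝ) : 𝕜) • u i
  simp only [dominationDefect_smul hp (hw _)] at hφ
  exact ⟨φ, by simpa [hu] using hφ⟩

theorem FactStronglySummingBound.exists_measure_domination (hp : 0 < p)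
    (hC : FactStronglySummingBound 𝕜 p T C) :
    ∃ μ : Measure (MultBall 𝕜 X), IsProbabilityMeasure μ ∧ μ.Regular ∧
      ∀ (m : ℕ) (lam : Fin m → 𝕜) (x : Fin m → ∀ k, X k),
        ‖∑ i, lam i • T (x i)‖ ≤
          C * (∫ φ : MultBall 𝕜 X, ‖∑ i, lam i • φ.1 (x i)‖ ^ p ∂μ) ^ (1 / p) := by
  let defect (u : (∀ k, X k) →₀ 𝕜) : C(MultBall 𝕜 X, ℝ) :=
    ⟨dominationDefect p C T u, continuous_dominationDefect hp.le u⟩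
  obtain ⟨μ, hμ, hreg, hμS⟩ := exists_regular_isProbabilityMeasure_integral_nonpos
    (convex_convexHull ℝ {g : C(MultBall 𝕜 X, ℝ) | ∃ u, ⇑g = dominationDefect p C T u})
    ⟨defect 0, subset_convexHull ℝ _ ⟨0, rfl⟩⟩ fun f hf => hC.exists_nonpos_of_mem_convexHull hp hf
  refine ⟨μ, hμ, hreg, fun m lam x => ?_⟩
  have hint := hμS (defect (∑ i, single (x i) (lam i))) (subset_convexHull ℝ _ ⟨_, rfl⟩)
  simp only [defect, ContinuousMap.coe_mk, integral_dominationDefect hp.le, map_sum,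
    linearCombination_single, sub_nonpos] at hint
  rw [← Real.rpow_rpow_inv (norm_nonneg _) hp.ne', ← one_div]
  exact (rpow_one_div_le_mul_rpow_one_div_iff (by positivity)
    (integral_nonneg fun _ => by positivity) hC.1 hp).2 hint

theorem factStronglySummingBound_of_domination (hp : 0 < p) (hC : 0 ≤ C)
    (μ : Measure (MultBall 𝕜 X)) [IsProbabilityMeasure μ]
    (hdom : ∀ (m : ℕ) (lam : Fin m → 𝕜) (x : Fin m → ∀ k, X k),
      ‖∑ i, lam i • T (x i)‖ ≤
        C * (∫ φ : MultBall 𝕜 X, ‖∑ i, lam i • φ.1 (x i)‖ ^ p ∂μ) ^ (1 / p)) :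
    FactStronglySummingBound 𝕜 p T C := by
  refine ⟨hC, fun m₁ m₂ x lam => ?_⟩
  let g (j : Fin m₁) (φ : MultBall 𝕜 X) : ℝ := ‖∑ i, lam j i • φ.1 (x j i)‖ ^ p
  have hg (j) : Continuous (g j) := by fun_prop (disch := exact hp.le)
  obtain ⟨-, hmax⟩ := MultBall.isGreatest_iSup <|
    (continuous_finsetSum _ fun j _ => hg j).rpow_const (p := 1 / p) fun _ =>
      Or.inr (by positivity)
  set S := ⨆ φ : {φ : ContinuousMultilinearMap 𝕜 X 𝕜 // ‖φ‖ ≤ 1}, (∑ j, g j φ) ^ (1 / p)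
  have hS : 0 ≤ S := (Real.rpow_nonneg (by positivity) _).trans (hmax ⟨Classical.arbitrary _, rfl⟩)
  have hrow (j) : ‖∑ i, lam j i • T (x j i)‖ ^ p ≤ C ^ p * ∫ φ, g j φ ∂μ := by
    rw [← rpow_one_div_le_mul_rpow_one_div_iff (by positivity)
      (integral_nonneg fun _ => by positivity) hC hp, ← Real.rpow_mul (norm_nonneg _),
      mul_one_div_cancel hp.ne', Real.rpow_one]
    exact hdom _ _ _
  have hsum : ∫ φ, ∑ j, g j φ ∂μ ≤ S ^ p := by
    refine (integral_mono ((continuous_finsetSum _ fun j _ => hg j).integrable_of_hasCompactSupport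
      (.of_compactSpace _)) (integrable_const (S ^ p)) fun φ => ?_).trans (by simp)
    have := hmax ⟨φ, rfl⟩
    dsimp only at this
    rwa [← Real.rpow_le_rpow_iff (by positivity) hS hp, ← Real.rpow_mul (by positivity),
      one_div_mul_cancel hp.ne', Real.rpow_one] at this
  have htotal : ∑ j, ‖∑ i, lam j i • T (x j i)‖ ^ p ≤ C ^ p * S ^ p := calc
    _ ≤ ∑ j, C ^ p * ∫ φ, g j φ ∂μ := Finset.sum_le_sum fun j _ => hrow j
    _ = C ^ p * ∫ φ, ∑ j, g j φ ∂μ := by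
      rw [← Finset.mul_sum, integral_finsetSum _ fun j _ =>
        (hg j).integrable_of_hasCompactSupport (.of_compactSpace _)]
    _ ≤ C ^ p * S ^ p := by gcongr
  rw [← rpow_one_div_le_mul_rpow_one_div_iff (by positivity) (by positivity) hC hp,
    ← Real.rpow_mul hS, mul_one_div_cancel hp.ne', Real.rpow_one] at htotal
  exact htotal

end Domination

theorem factStronglySumming_iff_domination_general
    {Y : Type*}
    [NormedAddCommGroup Y] [NormedSpace 𝕜 Y]
    (p : ℝ) (hp : 1 ≤ p) (T : ContinuousMultilinearMap 𝕜 X Y) :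
    FactStronglySumming 𝕜 p T ↔
      ∃ C : ℝ, 0 ≤ C ∧ ∃ μ : Measure (MultBall 𝕜 X), IsProbabilityMeasure μ ∧ μ.Regular ∧
        ∀ (m : ℕ) (lam : Fin m → 𝕜) (x : Fin m → ∀ k, X k),
          ‖∑ i, lam i • T (x i)‖ ≤
            C * (∫ φ : MultBall 𝕜 X, ‖∑ i, lam i • φ.1 (x i)‖ ^ p ∂μ) ^ (1 / p) := by
  have hp₀ : 0 < p := zero_lt_one.trans_le hp
  constructor
  · rintro ⟨C, hC⟩
    exact ⟨C, hC.1, hC.exists_measure_domination hp₀⟩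
  · rintro ⟨C, hC, μ, _, -, hdom⟩
    exact ⟨C, factStronglySummingBound_of_domination hp₀ hC μ hdom⟩

/-- Pietsch-Domination type theorem: `T` is factorable strongly
`p`-summing iff there are `C ≥ 0` and a regular Borel probability measure `μ` on the
unit ball of the continuous `n`-linear functionals (with the topology of pointwise
convergence) dominating `T` in the sense below. -/
theorem factStronglySumming_iff_domination
    {Y : Type*} [∀ k, CompleteSpace (X k)]
    [NormedAddCommGroup Y] [NormedSpace 𝕜 Y] [CompleteSpace Y]
    (p : ℝ) (hp : 1 ≤ p) (T : ContinuousMultilinearMap 𝕜 X Y) :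
    FactStronglySumming 𝕜 p T ↔
      ∃ C : ℝ, 0 ≤ C ∧ ∃ μ : Measure (MultBall 𝕜 X), IsProbabilityMeasure μ ∧ μ.Regular ∧
        ∀ (m : ℕ) (lam : Fin m → 𝕜) (x : Fin m → ∀ k, X k),
          ‖∑ i, lam i • T (x i)‖ ≤
            C * (∫ φ : MultBall 𝕜 X, ‖∑ i, lam i • φ.1 (x i)‖ ^ p ∂μ) ^ (1 / p) :=
  factStronglySumming_iff_domination_general p hp T
end

section
/- Let 1 ≤ p < ∞. If Q : G → X is a continuous m-homogeneous polynomial between Banach spaces and u : X → Y is an absolutely p-summing linear operator, then u ∘ Q is a factorable strongly p-summing m-homogeneous polynomial and ‖u ∘ Q‖_{FSt,p} ≤ π_p(u) · ‖Q‖. -/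
open scoped BigOperators
open MeasureTheory

/-!
Write `y_j = ∑ᵢ λ_j^i Q(x_j^i)`, so that `∑ᵢ λ_j^i u(Q(x_j^i)) = u(y_j)`, and apply the
`p`-summing inequality of `u` to the `y_j`. For a functional `φ` of norm at most one,
`φ ∘ Q = ‖Q‖ · q` with `q = ‖Q‖⁻¹ (φ ∘ Q)` a scalar `m`-homogeneous polynomial of norm at most
one, so the weak `ℓ_p` sum of the `y_j` is at most `‖Q‖` times the supremum over such `q`.
-/

theorem polyNorm_nonneg {X Y : Type*} [NormedAddCommGroup X] [NormedAddCommGroup Y]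
    (Q : X → Y) : 0 ≤ polyNorm Q :=
  Real.iSup_nonneg fun _ => norm_nonneg _

namespace IsHomogPoly

variable {𝕜 : Type*} [RCLike 𝕜] {X Y Z : Type*} [NormedAddCommGroup X] [NormedSpace 𝕜 X]
  [NormedAddCommGroup Y] [NormedSpace 𝕜 Y] [NormedAddCommGroup Z] [NormedSpace 𝕜 Z]
  {m : ℕ} {Q : X → Y}

theorem map_smul (hQ : IsHomogPoly 𝕜 m Q) (c : 𝕜) (x : X) : Q (c • x) = c ^ m • Q x := by
  obtain ⟨T, hT⟩ := hQ
  simpa [hT] using T.map_smul_univ (fun _ => c) (fun _ => x)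

theorem bddAbove_norm_unitBall (hQ : IsHomogPoly 𝕜 m Q) :
    BddAbove (Set.range fun x : {x : X // ‖x‖ ≤ 1} => ‖Q x.1‖) := by
  obtain ⟨T, hT⟩ := hQ
  refine ⟨‖T‖, ?_⟩
  rintro _ ⟨x, rfl⟩
  calc ‖Q x.1‖ ≤ ‖T‖ * ∏ _i : Fin m, ‖x.1‖ := hT x.1 ▸ T.le_opNorm _
    _ ≤ ‖T‖ * 1 := by gcongr; exact Finset.prod_le_one (fun _ _ => norm_nonneg _) fun _ _ => x.2
    _ = ‖T‖ := mul_one _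

theorem norm_le_polyNorm (hQ : IsHomogPoly 𝕜 m Q) {x : X} (hx : ‖x‖ ≤ 1) :
    ‖Q x‖ ≤ polyNorm Q :=
  le_ciSup hQ.bddAbove_norm_unitBall (⟨x, hx⟩ : {x : X // ‖x‖ ≤ 1})

theorem norm_apply_le (hQ : IsHomogPoly 𝕜 m Q) (x : X) : ‖Q x‖ ≤ polyNorm Q * ‖x‖ ^ m := by
  rcases eq_or_ne x 0 with rfl | hx
  · rcases m.eq_zero_or_pos with rfl | hm
    · simpa using hQ.norm_le_polyNorm (x := 0) (by simp)
    · have hQ0 : Q 0 = 0 := by simpa [zero_pow hm.ne'] using hQ.map_smul 0 0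
      simp [hQ0, zero_pow hm.ne']
  · have hr : 0 < ‖x‖ := norm_pos_iff.mpr hx
    have hc : (‖x‖ : 𝕜) ≠ 0 := RCLike.ofReal_ne_zero.mpr hr.ne'
    have hball : ‖(‖x‖ : 𝕜)⁻¹ • x‖ ≤ 1 := by
      rw [norm_smul, norm_inv, RCLike.norm_ofReal, abs_of_pos hr, inv_mul_cancel₀ hr.ne']
    have hx' : x = (‖x‖ : 𝕜) • (‖x‖ : 𝕜)⁻¹ • x := by rw [smul_inv_smul₀ hc]
    rw [hx', hQ.map_smul, norm_smul, norm_pow, RCLike.norm_ofReal, abs_of_pos hr,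
      ← hx', mul_comm]
    gcongr
    exact hQ.norm_le_polyNorm hball

theorem apply_eq_zero_of_polyNorm_eq_zero (hQ : IsHomogPoly 𝕜 m Q) (h : polyNorm Q = 0) (x : X) :
    Q x = 0 :=
  norm_le_zero_iff.mp (by simpa [h] using hQ.norm_apply_le x)

theorem continuousLinearMap_comp (hQ : IsHomogPoly 𝕜 m Q) (L : Y →L[𝕜] Z) :
    IsHomogPoly 𝕜 m (fun x => L (Q x)) := by
  obtain ⟨T, hT⟩ := hQ
  exact ⟨L.compContinuousMultilinearMap T, fun x => by simp [hT x]⟩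

theorem polyNorm_continuousLinearMap_comp_le (hQ : IsHomogPoly 𝕜 m Q) (L : Y →L[𝕜] Z) :
    polyNorm (fun x => L (Q x)) ≤ ‖L‖ * polyNorm Q :=
  Real.iSup_le (fun x => (L.le_opNorm _).trans (by gcongr; exact hQ.norm_le_polyNorm x.2))
    (mul_nonneg (norm_nonneg L) (polyNorm_nonneg Q))

end IsHomogPoly

section LpSum

variable {ι : Type*} [Fintype ι] {p : ℝ}

theorem sum_rpow_rpow_one_div_le_of_le (hp : 0 ≤ p) {a b : ι → ℝ} (ha : ∀ j, 0 ≤ a j)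
    (hab : ∀ j, a j ≤ b j) :
    (∑ j, a j ^ p) ^ (1 / p) ≤ (∑ j, b j ^ p) ^ (1 / p) := by
  gcongr with j
  · exact Finset.sum_nonneg fun j _ => Real.rpow_nonneg (ha j) p
  · exact ha j
  · exact hab j

theorem sum_mul_rpow_rpow_one_div (hp : p ≠ 0) {c : ℝ} (hc : 0 ≤ c) {a : ι → ℝ}
    (ha : ∀ j, 0 ≤ a j) :
    (∑ j, (c * a j) ^ p) ^ (1 / p) = c * (∑ j, a j ^ p) ^ (1 / p) := by
  simp_rw [Real.mul_rpow hc (ha _), ← Finset.mul_sum]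
  rw [Real.mul_rpow (Real.rpow_nonneg hc p)
    (Finset.sum_nonneg fun j _ => Real.rpow_nonneg (ha j) p), ← Real.rpow_mul hc,
    mul_one_div_cancel hp, Real.rpow_one]

end LpSum

open scoped Pointwise in
theorem sInf_le_sInf_mul_of_mul_mem {S T : Set ℝ} {N : ℝ} (hN : 0 ≤ N) (hT : BddBelow T)
    (hS : S.Nonempty) (hST : ∀ C ∈ S, C * N ∈ T) : sInf T ≤ sInf S * N := by
  have hsub : N • S ⊆ T := by
    rintro _ ⟨C, hC, rfl⟩
    simpa only [smul_eq_mul, mul_comm] using hST C hC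
  calc sInf T ≤ sInf (N • S) := csInf_le_csInf hT hS.smul_set hsub
    _ = sInf S * N := by rw [Real.sInf_smul_of_nonneg hN, smul_eq_mul, mul_comm]

section Composition

variable {𝕜 : Type*} [RCLike 𝕜] {G X Y : Type*}
  [NormedAddCommGroup G] [NormedSpace 𝕜 G] [NormedAddCommGroup X] [NormedSpace 𝕜 X]
  [NormedAddCommGroup Y] [NormedSpace 𝕜 Y] {m : ℕ} {p : ℝ} {Q : G → X}

theorem bddAbove_range_sum_rpow_homogPoly (hp : 0 ≤ p) {m₁ m₂ : ℕ} (x : Fin m₁ → Fin m₂ → G)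
    (lam : Fin m₁ → Fin m₂ → 𝕜) :
    BddAbove (Set.range fun q : {q : G → 𝕜 // IsHomogPoly 𝕜 m q ∧ polyNorm q ≤ 1} =>
      (∑ j, ‖∑ i, lam j i • q.1 (x j i)‖ ^ p) ^ (1 / p)) := by
  refine ⟨(∑ j, (∑ i, ‖lam j i‖ * ‖x j i‖ ^ m) ^ p) ^ (1 / p), ?_⟩
  rintro _ ⟨⟨q, hq, hq1⟩, rfl⟩
  refine sum_rpow_rpow_one_div_le_of_le hp (fun j => norm_nonneg _) fun j => ?_
  refine (norm_sum_le _ _).trans (Finset.sum_le_sum fun i _ => ?_)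
  rw [norm_smul]
  gcongr
  calc ‖q (x j i)‖ ≤ polyNorm q * ‖x j i‖ ^ m := hq.norm_apply_le _
    _ ≤ 1 * ‖x j i‖ ^ m := by gcongr
    _ = ‖x j i‖ ^ m := one_mul _

theorem iSup_dual_le_polyNorm_mul_iSup_homogPoly (hp : 0 < p) (hQ : IsHomogPoly 𝕜 m Q)
    {m₁ m₂ : ℕ} (x : Fin m₁ → Fin m₂ → G) (lam : Fin m₁ → Fin m₂ → 𝕜) :
    (⨆ φ : {φ : X →L[𝕜] 𝕜 // ‖φ‖ ≤ 1},
        (∑ j, ‖φ.1 (∑ i, lam j i • Q (x j i))‖ ^ p) ^ (1 / p)) ≤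
      polyNorm Q * ⨆ q : {q : G → 𝕜 // IsHomogPoly 𝕜 m q ∧ polyNorm q ≤ 1},
        (∑ j, ‖∑ i, lam j i • q.1 (x j i)‖ ^ p) ^ (1 / p) := by
  have : Nonempty {φ : X →L[𝕜] 𝕜 // ‖φ‖ ≤ 1} := ⟨⟨0, by simp⟩⟩
  refine ciSup_le fun ⟨φ, hφ⟩ => ?_
  set N := polyNorm Q
  set ψ : X →L[𝕜] 𝕜 := (N : 𝕜)⁻¹ • φ
  have hN0 : 0 ≤ N := polyNorm_nonneg Q
  have hψ : ‖ψ‖ ≤ N⁻¹ := by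
    rw [norm_smul, norm_inv, RCLike.norm_ofReal, abs_of_nonneg hN0]
    exact mul_le_of_le_one_right (inv_nonneg.mpr hN0) hφ
  have hψQ : polyNorm (fun z => ψ (Q z)) ≤ 1 :=
    calc polyNorm (fun z => ψ (Q z)) ≤ ‖ψ‖ * N := hQ.polyNorm_continuousLinearMap_comp_le ψ
      _ ≤ N⁻¹ * N := by gcongr
      _ ≤ 1 := inv_mul_le_one
  have hφQ : ∀ z, φ (Q z) = N * ψ (Q z) := by
    intro z
    rcases eq_or_ne N 0 with hN | hN
    · simp [hQ.apply_eq_zero_of_polyNorm_eq_zero hN z]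
    · simp only [ψ, FunLike.coe_smul, Pi.smul_apply, smul_eq_mul]
      rw [mul_inv_cancel_left₀ (RCLike.ofReal_ne_zero.mpr hN)]
  have hrow : ∀ j, ‖φ (∑ i, lam j i • Q (x j i))‖ = N * ‖∑ i, lam j i • ψ (Q (x j i))‖ := by
    intro j
    simp_rw [map_sum, map_smul, hφQ, smul_eq_mul, mul_left_comm _ (N : 𝕜), ← Finset.mul_sum,
      norm_mul, RCLike.norm_ofReal, abs_of_nonneg hN0]
  simp_rw [hrow]
  rw [sum_mul_rpow_rpow_one_div hp.ne' hN0 fun j => norm_nonneg _]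
  refine mul_le_mul_of_nonneg_left (le_ciSup (bddAbove_range_sum_rpow_homogPoly hp.le x lam)
    (⟨_, hQ.continuousLinearMap_comp ψ, hψQ⟩ :
      {q : G → 𝕜 // IsHomogPoly 𝕜 m q ∧ polyNorm q ≤ 1})) hN0

theorem factStronglySummingPolyBound_comp (hp : 0 < p) (hQ : IsHomogPoly 𝕜 m Q)
    {u : X →L[𝕜] Y} {C : ℝ} (hC : AbsSummingBound 𝕜 p u C) :
    FactStronglySummingPolyBound 𝕜 m p (fun z => u (Q z)) (C * polyNorm Q) := by
  refine ⟨mul_nonneg hC.1 (polyNorm_nonneg Q), fun m₁ m₂ x lam => ?_⟩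
  calc (∑ j, ‖∑ i, lam j i • u (Q (x j i))‖ ^ p) ^ (1 / p)
      = (∑ j, ‖u (∑ i, lam j i • Q (x j i))‖ ^ p) ^ (1 / p) := by simp only [map_sum, map_smul]
    _ ≤ C * ⨆ φ : {φ : X →L[𝕜] 𝕜 // ‖φ‖ ≤ 1},
          (∑ j, ‖φ.1 (∑ i, lam j i • Q (x j i))‖ ^ p) ^ (1 / p) := hC.2 _ _
    _ ≤ C * (polyNorm Q * ⨆ q : {q : G → 𝕜 // IsHomogPoly 𝕜 m q ∧ polyNorm q ≤ 1},
          (∑ j, ‖∑ i, lam j i • q.1 (x j i)‖ ^ p) ^ (1 / p)) :=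
      mul_le_mul_of_nonneg_left (iSup_dual_le_polyNorm_mul_iSup_homogPoly hp hQ x lam) hC.1
    _ = _ := (mul_assoc _ _ _).symm

end Composition

theorem absSumming_comp_homogPoly_general
    {𝕜 : Type*} [RCLike 𝕜] {G X Y : Type*}
    [NormedAddCommGroup G] [NormedSpace 𝕜 G]
    [NormedAddCommGroup X] [NormedSpace 𝕜 X]
    [NormedAddCommGroup Y] [NormedSpace 𝕜 Y]
    (m : ℕ) (p : ℝ) (hp : 1 ≤ p) (Q : G → X) (hQ : IsHomogPoly 𝕜 m Q)
    (u : X →L[𝕜] Y) (hu : AbsolutelySumming 𝕜 p u) :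
    FactStronglySummingPoly 𝕜 m p (fun x => u (Q x)) ∧
      fstPolyNorm 𝕜 m p (fun x => u (Q x)) ≤ piSummingNorm 𝕜 p u * polyNorm Q := by
  have hp0 : 0 < p := zero_lt_one.trans_le hp
  obtain ⟨Cu, hCu⟩ := hu
  exact ⟨⟨hQ.continuousLinearMap_comp u, _, factStronglySummingPolyBound_comp hp0 hQ hCu⟩,
    sInf_le_sInf_mul_of_mul_mem (polyNorm_nonneg Q) ⟨0, fun _ hC => hC.1⟩ ⟨Cu, hCu⟩
      fun _ hC => factStronglySummingPolyBound_comp hp0 hQ hC⟩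

/-- if `Q : G → X` is a continuous `m`-homogeneous polynomial and
`u : X → Y` is absolutely `p`-summing, then `u ∘ Q` is a factorable strongly
`p`-summing `m`-homogeneous polynomial with `‖u ∘ Q‖_{FSt,p} ≤ π_p(u) ‖Q‖`. -/
theorem absSumming_comp_homogPoly
    {𝕜 : Type*} [RCLike 𝕜] {G X Y : Type*}
    [NormedAddCommGroup G] [NormedSpace 𝕜 G] [CompleteSpace G]
    [NormedAddCommGroup X] [NormedSpace 𝕜 X] [CompleteSpace X]
    [NormedAddCommGroup Y] [NormedSpace 𝕜 Y] [CompleteSpace Y]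
    (m : ℕ) (p : ℝ) (hp : 1 ≤ p) (Q : G → X) (hQ : IsHomogPoly 𝕜 m Q)
    (u : X →L[𝕜] Y) (hu : AbsolutelySumming 𝕜 p u) :
    FactStronglySummingPoly 𝕜 m p (fun x => u (Q x)) ∧
      fstPolyNorm 𝕜 m p (fun x => u (Q x)) ≤ piSummingNorm 𝕜 p u * polyNorm Q :=
  absSumming_comp_homogPoly_general m p hp Q hQ u hu
end

section
/- (Grothendieck type theorem) Let m ≥ 1 be a positive integer. Every continuous m-homogeneous polynomial P : ℓ_1 → ℓ_2 is factorable strongly 1-summing. -/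
open scoped BigOperators
open MeasureTheory

/-!
Write `P = T (x, …, x)` and let `S` be the supremum on the right-hand side (for `p = 1`). On
vectors supported in the first `N` coordinates of `ℓ¹`, multilinearity gives
`∑ᵢ λⱼᵢ P (xⱼᵢ) = ∑ₖ zⱼₖ T (e_{k 1}, …, e_{k m})` with `zⱼₖ = ∑ᵢ λⱼᵢ ∏ₗ xⱼᵢ (k l)`.
For `|bₖ| ≤ 1`, `ξ ↦ ∑ₖ bₖ ∏ₗ ξ (k l)` is an `m`-homogeneous polynomial of norm at most `1` on
`ℓ¹`, so `∑ⱼ |∑ₖ zⱼₖ bₖ| ≤ S`: the matrix `z` has norm at most `S` from `ℓ∞` to `ℓ¹`.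
Grothendieck's inequality, applied to `z` and to the vectors `T (e_{k 1}, …, e_{k m})` of norm at
most `‖T‖` in `ℓ²`, bounds `∑ⱼ ‖∑ᵢ λⱼᵢ P (xⱼᵢ)‖` by a constant times `‖T‖ S`, uniformly in `N`;
letting `N → ∞` removes the truncation.
-/

open Finset

def rademacher (b : Bool) : ℝ := if b then 1 else -1

def rademacherSum {D : ℕ} (x : Fin D → ℝ) (ω : Fin D → Bool) : ℝ :=
  ∑ d, x d * rademacher (ω d)

lemma sum_fun_fin_succ_bool {M : Type*} [AddCommMonoid M] {D : ℕ}
    (f : (Fin (D + 1) → Bool) → M) :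
    ∑ ω, f ω = ∑ ω : Fin D → Bool, (f (Fin.cons true ω) + f (Fin.cons false ω)) := by
  rw [← (Fin.consEquiv fun _ : Fin (D + 1) => Bool).sum_comp f, Fintype.sum_prod_type,
    Fintype.sum_bool, ← sum_add_distrib]
  rfl

lemma rademacherSum_cons {D : ℕ} (x : Fin (D + 1) → ℝ) (b : Bool) (ω : Fin D → Bool) :
    rademacherSum x (Fin.cons b ω) = x 0 * rademacher b + rademacherSum (Fin.tail x) ω := by
  simp [rademacherSum, Fin.sum_univ_succ, Fin.tail]

lemma sum_rademacherSum_mul {D : ℕ} (x y : Fin D → ℝ) :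
    ∑ ω, rademacherSum x ω * rademacherSum y ω = 2 ^ D * ∑ d, x d * y d := by
  induction D with
  | zero => simp [rademacherSum]
  | succ D ih =>
    have hω (ω : Fin D → Bool) :
        rademacherSum x (Fin.cons true ω) * rademacherSum y (Fin.cons true ω) +
          rademacherSum x (Fin.cons false ω) * rademacherSum y (Fin.cons false ω) =
        2 * (rademacherSum (Fin.tail x) ω * rademacherSum (Fin.tail y) ω) + 2 * (x 0 * y 0) := by
      simp only [rademacherSum_cons, rademacher]
      norm_num
      ring
    rw [sum_fun_fin_succ_bool, sum_congr rfl fun ω _ => hω ω, sum_add_distrib, ← mul_sum, ih,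
      sum_const, card_univ, Fintype.card_fun, Fintype.card_bool, Fintype.card_fin, nsmul_eq_mul,
      Fin.sum_univ_succ]
    simp only [Fin.tail]
    push_cast
    ring

lemma sum_rademacherSum_sq {D : ℕ} (x : Fin D → ℝ) :
    ∑ ω, rademacherSum x ω ^ 2 = 2 ^ D * ∑ d, x d ^ 2 := by
  simpa [sq] using sum_rademacherSum_mul x x

lemma sum_rademacherSum_pow_four_le {D : ℕ} (x : Fin D → ℝ) :
    ∑ ω, rademacherSum x ω ^ 4 ≤ 2 ^ D * (3 * (∑ d, x d ^ 2) ^ 2) := by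
  induction D with
  | zero => simp [rademacherSum]
  | succ D ih =>
    have hω (ω : Fin D → Bool) :
        rademacherSum x (Fin.cons true ω) ^ 4 + rademacherSum x (Fin.cons false ω) ^ 4 =
        2 * rademacherSum (Fin.tail x) ω ^ 4 +
          12 * x 0 ^ 2 * rademacherSum (Fin.tail x) ω ^ 2 + 2 * x 0 ^ 4 := by
      simp only [rademacherSum_cons, rademacher]
      norm_num
      ring
    rw [sum_fun_fin_succ_bool, sum_congr rfl fun ω _ => hω ω, sum_add_distrib, sum_add_distrib,
      ← mul_sum, ← mul_sum, sum_rademacherSum_sq, sum_const, card_univ, Fintype.card_fun,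
      Fintype.card_bool, Fintype.card_fin, nsmul_eq_mul, Fin.sum_univ_succ, pow_succ (2 : ℝ) D]
    have h4 := ih (Fin.tail x)
    simp only [Fin.tail] at h4 ⊢
    push_cast
    nlinarith [mul_nonneg (pow_nonneg (zero_le_two : (0 : ℝ) ≤ 2) D)
      (pow_nonneg (sq_nonneg (x 0)) 2)]

lemma sum_rademacherSum_sq_le {D : ℕ} {x : Fin D → ℝ} (hx : ∑ d, x d ^ 2 ≤ 1) :
    ∑ ω, rademacherSum x ω ^ 2 ≤ 2 ^ D := by
  rw [sum_rademacherSum_sq]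
  exact mul_le_of_le_one_right (by positivity) hx

def clip (M t : ℝ) : ℝ := max (min t M) (-M)

section Clip

variable {M : ℝ}

lemma clip_cases (hM : 0 ≤ M) (t : ℝ) :
    (t ≤ -M ∧ clip M t = -M) ∨ (|t| ≤ M ∧ clip M t = t) ∨ (M ≤ t ∧ clip M t = M) := by
  unfold clip
  rcases le_total t (-M) with h | h
  · exact Or.inl ⟨h, by rw [min_eq_left (by linarith), max_eq_right h]⟩
  rcases le_total t M with h' | h'
  · exact Or.inr (Or.inl ⟨abs_le.2 ⟨h, h'⟩, by rw [min_eq_left h', max_eq_left h]⟩)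
  · exact Or.inr (Or.inr ⟨h', by rw [min_eq_right h', max_eq_left (by linarith)]⟩)

lemma abs_clip_le (hM : 0 ≤ M) (t : ℝ) : |clip M t| ≤ M := by
  rcases clip_cases hM t with ⟨-, e⟩ | ⟨h, e⟩ | ⟨-, e⟩ <;> rw [e]
  exacts [(abs_neg M).trans_le (abs_of_nonneg hM).le, h, (abs_of_nonneg hM).le]

lemma clip_sq_le (hM : 0 ≤ M) (t : ℝ) : clip M t ^ 2 ≤ t ^ 2 := by
  rcases clip_cases hM t with ⟨h, e⟩ | ⟨-, e⟩ | ⟨h, e⟩ <;> rw [e] <;> nlinarith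

lemma sub_clip_sq_mul_sq_le (hM : 0 ≤ M) (t : ℝ) : (t - clip M t) ^ 2 * M ^ 2 ≤ t ^ 4 := by
  rcases clip_cases hM t with ⟨h, e⟩ | ⟨-, e⟩ | ⟨h, e⟩ <;> rw [e]
  · nlinarith [mul_le_mul (by nlinarith : (t + M) ^ 2 ≤ t ^ 2) (by nlinarith : M ^ 2 ≤ t ^ 2)
      (sq_nonneg M) (sq_nonneg t)]
  · rw [sub_self, zero_pow two_ne_zero, zero_mul]
    positivity
  · nlinarith [mul_le_mul (by nlinarith : (t - M) ^ 2 ≤ t ^ 2) (by nlinarith : M ^ 2 ≤ t ^ 2)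
      (sq_nonneg M) (sq_nonneg t)]

end Clip

lemma sum_clip_rademacherSum_sq_le {D : ℕ} {x : Fin D → ℝ} (hx : ∑ d, x d ^ 2 ≤ 1) :
    ∑ ω, clip 7 (rademacherSum x ω) ^ 2 ≤ 2 ^ D :=
  (sum_le_sum fun ω _ => clip_sq_le (by norm_num) _).trans (sum_rademacherSum_sq_le hx)

/-- `‖4 (f - clip 7 f)‖₂² ≤ 16 ‖f‖₄⁴ / 49 ≤ 48/49 · 2^D` by the fourth-moment bound. -/
lemma sum_sq_four_mul_sub_clip_rademacherSum_le {D : ℕ} {x : Fin D → ℝ}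
    (hx : ∑ d, x d ^ 2 ≤ 1) :
    ∑ ω, (4 * (rademacherSum x ω - clip 7 (rademacherSum x ω))) ^ 2 ≤ 2 ^ D := by
  have h49 := sum_le_sum fun ω (_ : ω ∈ univ) =>
    sub_clip_sq_mul_sq_le (by norm_num : (0 : ℝ) ≤ 7) (rademacherSum x ω)
  have h4 := sum_rademacherSum_pow_four_le x
  have hx0 : 0 ≤ ∑ d, x d ^ 2 := sum_nonneg fun _ _ => sq_nonneg _
  have hx2 := mul_le_mul_of_nonneg_left (pow_le_one₀ hx0 hx : (∑ d, x d ^ 2) ^ 2 ≤ 1)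
    (pow_pos (by norm_num : (0 : ℝ) < 2) D).le
  simp only [← sum_mul, mul_pow] at h49 ⊢
  rw [← mul_sum]
  norm_num at h49 ⊢
  linarith [pow_pos (by norm_num : (0 : ℝ) < 2) D]

section Grothendieck

variable {J K : Type*} [Fintype J] [Fintype K]

def matrixPairing {ι : Type*} [Fintype ι] (A : J → K → ℝ) (x : J → ι → ℝ) (y : K → ι → ℝ) : ℝ :=
  ∑ j, ∑ k, A j k * ∑ i, x j i * y k i

def grothendieckValues (A : J → K → ℝ) : Set ℝ :=
  {r | ∃ (D : ℕ) (x : J → Fin D → ℝ) (y : K → Fin D → ℝ),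
    (∀ j, ∑ d, x j d ^ 2 ≤ 1) ∧ (∀ k, ∑ d, y k d ^ 2 ≤ 1) ∧ r = matrixPairing A x y}

lemma matrixPairing_const_mul_left {ι : Type*} [Fintype ι] (A : J → K → ℝ) (c : ℝ)
    (x : J → ι → ℝ) (y : K → ι → ℝ) :
    matrixPairing A (fun j i => c * x j i) y = c * matrixPairing A x y := by
  simp only [matrixPairing, mul_sum]
  exact sum_congr rfl fun j _ => sum_congr rfl fun k _ => sum_congr rfl fun i _ => by ring

lemma matrixPairing_const_mul_right {ι : Type*} [Fintype ι] (A : J → K → ℝ) (c : ℝ)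
    (x : J → ι → ℝ) (y : K → ι → ℝ) :
    matrixPairing A x (fun k i => c * y k i) = c * matrixPairing A x y := by
  simp only [matrixPairing, mul_sum]
  exact sum_congr rfl fun j _ => sum_congr rfl fun k _ => sum_congr rfl fun i _ => by ring

lemma inv_mul_matrixPairing_mem_grothendieckValues {ι : Type*} [Fintype ι] (A : J → K → ℝ)
    {c : ℝ} (hc : 0 < c) {x : J → ι → ℝ} {y : K → ι → ℝ}
    (hx : ∀ j, ∑ i, x j i ^ 2 ≤ c) (hy : ∀ k, ∑ i, y k i ^ 2 ≤ c) :
    c⁻¹ * matrixPairing A x y ∈ grothendieckValues A := by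
  set e := Fintype.equivFin ι
  set s := (Real.sqrt c)⁻¹
  have hs : s ^ 2 = c⁻¹ := by rw [inv_pow, Real.sq_sqrt hc.le]
  have hball {v : ι → ℝ} (hv : ∑ i, v i ^ 2 ≤ c) : ∑ d, (s * v (e.symm d)) ^ 2 ≤ 1 := by
    rw [e.symm.sum_comp fun i => (s * v i) ^ 2]
    simp_rw [mul_pow, ← mul_sum, hs]
    exact inv_mul_le_one_of_le₀ hv hc.le
  refine ⟨Fintype.card ι, fun j d => s * x j (e.symm d), fun k d => s * y k (e.symm d),
    fun j => hball (hx j), fun k => hball (hy k), ?_⟩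
  simp only [matrixPairing, mul_sum]
  refine sum_congr rfl fun j _ => sum_congr rfl fun k _ => ?_
  rw [← e.symm.sum_comp]
  refine sum_congr rfl fun i _ => ?_
  rw [← hs]
  ring

lemma abs_sum_mul_le_one {ι : Type*} [Fintype ι] {a b : ι → ℝ}
    (ha : ∑ i, a i ^ 2 ≤ 1) (hb : ∑ i, b i ^ 2 ≤ 1) : |∑ i, a i * b i| ≤ 1 := by
  have h := sum_mul_sq_le_sq_mul_sq univ a b
  rw [← sq_le_one_iff_abs_le_one]
  nlinarith [sum_nonneg fun i (_ : i ∈ univ) => sq_nonneg (a i),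
    sum_nonneg fun i (_ : i ∈ univ) => sq_nonneg (b i)]

lemma bddAbove_grothendieckValues (A : J → K → ℝ) : BddAbove (grothendieckValues A) := by
  refine ⟨∑ j, ∑ k, |A j k|, ?_⟩
  rintro r ⟨D, x, y, hx, hy, rfl⟩
  refine sum_le_sum fun j _ => sum_le_sum fun k _ => ?_
  calc A j k * ∑ d, x j d * y k d ≤ |A j k| * |∑ d, x j d * y k d| :=
        (le_abs_self _).trans (abs_mul _ _).le
    _ ≤ |A j k| := mul_le_of_le_one_right (abs_nonneg _) (abs_sum_mul_le_one (hx j) (hy k))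

lemma matrixPairing_le_of_abs_le {Ω : Type*} [Fintype Ω] (A : J → K → ℝ) {β : ℝ}
    (hA : ∀ (u : J → ℝ) (v : K → ℝ), (∀ j, |u j| ≤ 1) → (∀ k, |v k| ≤ 1) →
      ∑ j, ∑ k, A j k * (u j * v k) ≤ β)
    {M : ℝ} (hM : 0 < M) {a : J → Ω → ℝ} {b : K → Ω → ℝ}
    (ha : ∀ j ω, |a j ω| ≤ M) (hb : ∀ k ω, |b k ω| ≤ M) :
    matrixPairing A a b ≤ Fintype.card Ω * (M ^ 2 * β) := by
  have hunit {t : ℝ} (ht : |t| ≤ M) : |t / M| ≤ 1 := by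
    rwa [abs_div, abs_of_pos hM, div_le_one hM]
  have hω (ω : Ω) : ∑ j, ∑ k, A j k * (a j ω * b k ω) ≤ M ^ 2 * β := by
    have h := hA (fun j => a j ω / M) (fun k => b k ω / M) (fun j => hunit (ha j ω))
      fun k => hunit (hb k ω)
    calc ∑ j, ∑ k, A j k * (a j ω * b k ω)
        = M ^ 2 * ∑ j, ∑ k, A j k * (a j ω / M * (b k ω / M)) := by
          simp only [mul_sum]
          refine sum_congr rfl fun j _ => sum_congr rfl fun k _ => ?_
          field_simp
      _ ≤ M ^ 2 * β := mul_le_mul_of_nonneg_left h (sq_nonneg M)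
  calc matrixPairing A a b = ∑ ω, ∑ j, ∑ k, A j k * (a j ω * b k ω) := by
        simp only [matrixPairing, mul_sum]
        exact (sum_congr rfl fun j _ => sum_comm).trans sum_comm
    _ ≤ ∑ _ω : Ω, M ^ 2 * β := sum_le_sum fun ω _ => hω ω
    _ = Fintype.card Ω * (M ^ 2 * β) := by simp

/-- Self-improvement: write unit vectors of `ℝ^D` as Rademacher sums on `{±1}^D` and clip them
at level `7`. The clipped part is controlled by the hypothesis on sign vectors, and by the
fourth-moment bound each clipping error is a quarter of another value of the pairing. -/
lemma le_of_mem_grothendieckValues (A : J → K → ℝ) {β : ℝ}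
    (hA : ∀ (u : J → ℝ) (v : K → ℝ), (∀ j, |u j| ≤ 1) → (∀ k, |v k| ≤ 1) →
      ∑ j, ∑ k, A j k * (u j * v k) ≤ β)
    {r : ℝ} (hr : r ∈ grothendieckValues A) :
    r ≤ 49 * β + sSup (grothendieckValues A) / 2 := by
  obtain ⟨D, x, y, hx, hy, rfl⟩ := hr
  set F := sSup (grothendieckValues A)
  have hc : (0 : ℝ) < 2 ^ D := by positivity
  set φ : J → (Fin D → Bool) → ℝ := fun j => rademacherSum (x j)
  set ψ : K → (Fin D → Bool) → ℝ := fun k => rademacherSum (y k)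
  set φ₀ : J → (Fin D → Bool) → ℝ := fun j ω => clip 7 (φ j ω)
  set ψ₀ : K → (Fin D → Bool) → ℝ := fun k ω => clip 7 (ψ k ω)
  have hsplit : matrixPairing A x y = (2 ^ D)⁻¹ * (matrixPairing A φ₀ ψ₀ +
      matrixPairing A φ₀ (ψ - ψ₀) + matrixPairing A (φ - φ₀) ψ) := by
    have hφψ : matrixPairing A x y = (2 ^ D)⁻¹ * matrixPairing A φ ψ := by
      rw [eq_inv_mul_iff_mul_eq₀ hc.ne']
      simp only [matrixPairing, φ, ψ, sum_rademacherSum_mul, mul_sum]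
      refine sum_congr rfl fun j _ => sum_congr rfl fun k _ => sum_congr rfl fun d _ => ?_
      ring
    rw [hφψ]
    congr 1
    simp only [matrixPairing, ← sum_add_distrib, ← mul_add, Pi.sub_apply]
    exact sum_congr rfl fun j _ => sum_congr rfl fun k _ =>
      congrArg _ (sum_congr rfl fun ω _ => by ring)
  have hvalue {a : J → (Fin D → Bool) → ℝ} {b : K → (Fin D → Bool) → ℝ}
      (ha : ∀ j, ∑ ω, a j ω ^ 2 ≤ 2 ^ D) (hb : ∀ k, ∑ ω, b k ω ^ 2 ≤ 2 ^ D) :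
      matrixPairing A a b ≤ 2 ^ D * F := by
    have := le_csSup (bddAbove_grothendieckValues A)
      (inv_mul_matrixPairing_mem_grothendieckValues A hc ha hb)
    rwa [inv_mul_le_iff₀ hc] at this
  have hmain : matrixPairing A φ₀ ψ₀ ≤ 2 ^ D * (7 ^ 2 * β) := by
    simpa using matrixPairing_le_of_abs_le A hA (by norm_num : (0 : ℝ) < 7) (a := φ₀) (b := ψ₀)
      (fun j ω => abs_clip_le (by norm_num) _) fun k ω => abs_clip_le (by norm_num) _
  have herr_left := hvalue (fun j => sum_clip_rademacherSum_sq_le (hx j))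
    (b := fun k ω => 4 * (ψ - ψ₀) k ω) fun k => sum_sq_four_mul_sub_clip_rademacherSum_le (hy k)
  have herr_right := hvalue (a := fun j ω => 4 * (φ - φ₀) j ω)
    (fun j => sum_sq_four_mul_sub_clip_rademacherSum_le (hx j))
    fun k => sum_rademacherSum_sq_le (hy k)
  rw [matrixPairing_const_mul_right] at herr_left
  rw [matrixPairing_const_mul_left] at herr_right
  rw [hsplit, inv_mul_le_iff₀ hc]
  linarith

theorem grothendieck_matrixPairing_le {ι : Type*} [Fintype ι] (A : J → K → ℝ) {β : ℝ}
    (hA : ∀ (u : J → ℝ) (v : K → ℝ), (∀ j, |u j| ≤ 1) → (∀ k, |v k| ≤ 1) →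
      ∑ j, ∑ k, A j k * (u j * v k) ≤ β)
    {x : J → ι → ℝ} {y : K → ι → ℝ}
    (hx : ∀ j, ∑ i, x j i ^ 2 ≤ 1) (hy : ∀ k, ∑ i, y k i ^ 2 ≤ 1) :
    matrixPairing A x y ≤ 98 * β := by
  have hmem := inv_mul_matrixPairing_mem_grothendieckValues A one_pos hx hy
  rw [inv_one, one_mul] at hmem
  have hsup : sSup (grothendieckValues A) ≤ 49 * β + sSup (grothendieckValues A) / 2 :=
    csSup_le ⟨_, hmem⟩ fun r hr => le_of_mem_grothendieckValues A hA hr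
  linarith [le_csSup (bddAbove_grothendieckValues A) hmem]

end Grothendieck

section InnerProduct

open RCLike

variable {𝕜 : Type*} [RCLike 𝕜] {E : Type*} [NormedAddCommGroup E] [InnerProductSpace 𝕜 E]

lemma exists_sum_mul_eq_re_inner {ι : Type*} [Fintype ι] (v : ι → E) :
    ∃ w : ι → ι → ℝ, ∀ a b, ∑ d, w a d * w b d = re (inner 𝕜 (v a) (v b)) := by
  classical
  set G : Matrix ι ι ℝ := Matrix.of fun a b => re (inner 𝕜 (v a) (v b))
  have hG : G.PosSemidef := by
    refine Matrix.posSemidef_iff_dotProduct_mulVec.mpr ⟨?_, fun c => ?_⟩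
    · ext a b
      simp only [G, Matrix.conjTranspose_apply, Matrix.of_apply, star_trivial]
      rw [← inner_conj_symm, conj_re]
    · have : dotProduct (star c) (G.mulVec c) =
          re (inner 𝕜 (∑ a, (c a : 𝕜) • v a) (∑ b, (c b : 𝕜) • v b)) := by
        simp only [dotProduct, Matrix.mulVec, Pi.star_apply, star_trivial, sum_inner,
          inner_sum, inner_smul_left, inner_smul_right, conj_ofReal, map_sum, re_ofReal_mul,
          G, Matrix.of_apply, mul_sum]
        rw [sum_comm]
        exact sum_congr rfl fun a _ => sum_congr rfl fun b _ => by ring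
      rw [this]
      exact inner_self_nonneg
  open scoped MatrixOrder in
  obtain ⟨B, hB⟩ := CStarAlgebra.nonneg_iff_eq_star_mul_self.mp hG.nonneg
  refine ⟨fun a d => B d a, fun a b => ?_⟩
  change _ = G a b
  rw [hB, Matrix.star_eq_conjTranspose, Matrix.mul_apply]
  simp

variable {J K : Type*} [Fintype J] [Fintype K]

theorem grothendieck_sum_sum_mul_re_inner_le (A : J → K → ℝ) {β : ℝ}
    (hA : ∀ (u : J → ℝ) (v : K → ℝ), (∀ j, |u j| ≤ 1) → (∀ k, |v k| ≤ 1) →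
      ∑ j, ∑ k, A j k * (u j * v k) ≤ β)
    {x : J → E} {y : K → E} (hx : ∀ j, ‖x j‖ ≤ 1) (hy : ∀ k, ‖y k‖ ≤ 1) :
    ∑ j, ∑ k, A j k * re (inner 𝕜 (x j) (y k)) ≤ 98 * β := by
  obtain ⟨w, hw⟩ := exists_sum_mul_eq_re_inner (𝕜 := 𝕜) (Sum.elim x y)
  have hball (a : J ⊕ K) (ha : ‖Sum.elim x y a‖ ≤ 1) : ∑ d, w a d ^ 2 ≤ 1 := by
    simp only [sq, hw, inner_self_eq_norm_sq]
    nlinarith [norm_nonneg (Sum.elim x y a)]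
  have := grothendieck_matrixPairing_le A hA (fun j => hball (.inl j) (hx j))
    (fun k => hball (.inr k) (hy k))
  simpa only [matrixPairing, hw, Sum.elim_inl, Sum.elim_inr] using this

end InnerProduct

section ComplexGrothendieck

open RCLike

variable {𝕜 : Type*} [RCLike 𝕜] {E : Type*} [NormedAddCommGroup E] [InnerProductSpace 𝕜 E]
  {J K : Type*} [Fintype J] [Fintype K]

def reImMatrix (z : J → K → 𝕜) : J → K ⊕ K → ℝ :=
  fun j => Sum.elim (fun k => re (z j k)) (fun k => im (z j k))

lemma norm_I_le_one : ‖(I : 𝕜)‖ ≤ 1 := by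
  rw [norm_I]
  split_ifs <;> norm_num

lemma sum_sum_reImMatrix_mul_le {z : J → K → 𝕜} {S : ℝ}
    (hz : ∀ b : K → 𝕜, (∀ k, ‖b k‖ ≤ 1) → ∑ j, ‖∑ k, z j k * b k‖ ≤ S)
    (u : J → ℝ) (v : K ⊕ K → ℝ) (hu : ∀ j, |u j| ≤ 1) (hv : ∀ c, |v c| ≤ 1) :
    ∑ j, ∑ c, reImMatrix z j c * (u j * v c) ≤ 2 * S := by
  set b : K → 𝕜 := fun k => (v (.inl k) : 𝕜) - v (.inr k) * I
  have hb (k : K) : ‖b k‖ ≤ 2 := by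
    refine (norm_sub_le _ _).trans ?_
    rw [norm_mul, norm_ofReal, norm_ofReal]
    nlinarith [hv (.inl k), hv (.inr k), abs_nonneg (v (.inr k)), norm_I_le_one (𝕜 := 𝕜),
      norm_nonneg (I : 𝕜)]
  have hrow (j : J) : ∑ c, reImMatrix z j c * v c = re (∑ k, z j k * b k) := by
    rw [Fintype.sum_sum_type, ← sum_add_distrib, map_sum]
    refine sum_congr rfl fun k _ => ?_
    rw [mul_sub, map_sub, re_mul_ofReal, mul_left_comm, re_ofReal_mul, mul_comm (z j k), I_mul_re]
    simp only [reImMatrix, Sum.elim_inl, Sum.elim_inr]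
    ring
  calc ∑ j, ∑ c, reImMatrix z j c * (u j * v c) = ∑ j, u j * re (∑ k, z j k * b k) := by
        refine sum_congr rfl fun j _ => ?_
        rw [← hrow, mul_sum]
        exact sum_congr rfl fun c _ => by ring
    _ ≤ ∑ j, ‖∑ k, z j k * b k‖ := sum_le_sum fun j _ =>
        (le_abs_self _).trans <| (abs_mul _ _).trans_le <|
          mul_le_of_le_one_left (abs_nonneg _) (hu j) |>.trans (abs_re_le_norm _)
    _ = 2 * ∑ j, ‖∑ k, z j k * (b k / 2)‖ := by
        rw [mul_sum]
        refine sum_congr rfl fun j _ => ?_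
        simp_rw [mul_div_assoc', ← sum_div, norm_div, RCLike.norm_ofNat]
        ring
    _ ≤ 2 * S := by
        refine mul_le_mul_of_nonneg_left (hz _ fun k => ?_) zero_le_two
        rw [norm_div, RCLike.norm_ofNat]
        linarith [hb k]

lemma re_mul_inner_eq (z : 𝕜) (x c : E) :
    re (z * inner 𝕜 x c) = re z * re (inner 𝕜 x c) + im z * re (inner 𝕜 x ((I : 𝕜) • c)) := by
  rw [inner_smul_right, I_mul_re, mul_re]
  ring

theorem sum_norm_sum_smul_le_of_norm_le_one {z : J → K → 𝕜} {S : ℝ}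
    (hz : ∀ b : K → 𝕜, (∀ k, ‖b k‖ ≤ 1) → ∑ j, ‖∑ k, z j k * b k‖ ≤ S)
    {c : K → E} (hc : ∀ k, ‖c k‖ ≤ 1) :
    ∑ j, ‖∑ k, z j k • c k‖ ≤ 196 * S := by
  set y : J → E := fun j => ∑ k, z j k • c k
  set x : J → E := fun j => ((‖y j‖⁻¹ : ℝ) : 𝕜) • y j
  have hx (j : J) : ‖x j‖ ≤ 1 := by
    rw [norm_smul, norm_ofReal, abs_inv, abs_norm]
    exact inv_mul_le_one_of_le₀ le_rfl (norm_nonneg _)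
  have hxy (j : J) : ‖y j‖ = re (inner 𝕜 (x j) (y j)) := by
    rw [inner_smul_left, conj_ofReal, re_ofReal_mul, inner_self_eq_norm_sq]
    rcases eq_or_ne ‖y j‖ 0 with h | h
    · simp [h]
    · field_simp
  set w : K ⊕ K → E := Sum.elim c fun k => (I : 𝕜) • c k
  have hw (k : K ⊕ K) : ‖w k‖ ≤ 1 := by
    rcases k with k | k
    · exact hc k
    · exact (norm_smul_le _ _).trans (mul_le_one₀ norm_I_le_one (norm_nonneg _) (hc k))
  calc ∑ j, ‖y j‖ = ∑ j, ∑ k, reImMatrix z j k * re (inner 𝕜 (x j) (w k)) := by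
        refine sum_congr rfl fun j _ => ?_
        simp only [hxy, y, inner_sum, inner_smul_right, map_sum]
        simp only [re_mul_inner_eq, Fintype.sum_sum_type, ← sum_add_distrib, reImMatrix, w,
          Sum.elim_inl, Sum.elim_inr]
    _ ≤ 98 * (2 * S) :=
        grothendieck_sum_sum_mul_re_inner_le (reImMatrix z) (sum_sum_reImMatrix_mul_le hz) hx hw
    _ = 196 * S := by ring

/-- `hz` says that `z : ℓ∞(K) → ℓ¹(J)` has norm at most `S`. -/
theorem sum_norm_sum_smul_le {z : J → K → 𝕜} {S : ℝ}
    (hz : ∀ b : K → 𝕜, (∀ k, ‖b k‖ ≤ 1) → ∑ j, ‖∑ k, z j k * b k‖ ≤ S)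
    {M : ℝ} (hM : 0 ≤ M) {c : K → E} (hc : ∀ k, ‖c k‖ ≤ M) :
    ∑ j, ‖∑ k, z j k • c k‖ ≤ 196 * M * S := by
  rcases hM.eq_or_lt with rfl | hM
  · simp [fun k => norm_le_zero_iff.1 (hc k)]
  have hc' (k : K) : ‖((M⁻¹ : ℝ) : 𝕜) • c k‖ ≤ 1 := by
    rw [norm_smul, norm_ofReal, abs_inv, abs_of_pos hM]
    exact inv_mul_le_one_of_le₀ (hc k) hM.le
  calc ∑ j, ‖∑ k, z j k • c k‖ = M * ∑ j, ‖∑ k, z j k • ((M⁻¹ : ℝ) : 𝕜) • c k‖ := by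
        simp only [smul_comm (z _ _), ← smul_sum, norm_smul, norm_ofReal, abs_inv,
          abs_of_pos hM, ← mul_sum, mul_inv_cancel_left₀ hM.ne']
    _ ≤ M * (196 * S) :=
        mul_le_mul_of_nonneg_left (sum_norm_sum_smul_le_of_norm_le_one hz hc') hM.le
    _ = 196 * M * S := by ring

end ComplexGrothendieck

section HomogeneousPolynomial

variable {𝕜 : Type*} [RCLike 𝕜] {X Y : Type*} [NormedAddCommGroup X] [NormedSpace 𝕜 X]
  [NormedAddCommGroup Y] [NormedSpace 𝕜 Y] {m : ℕ} {q : X → Y}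

lemma IsHomogPoly.map_smul_s8 (hq : IsHomogPoly 𝕜 m q) (c : 𝕜) (ξ : X) :
    q (c • ξ) = c ^ m • q ξ := by
  obtain ⟨T, hT⟩ := hq
  rw [hT, hT, T.map_smul_univ (fun _ => c), prod_const, card_univ, Fintype.card_fin]

lemma IsHomogPoly.norm_le_polyNorm_mul_pow (hq : IsHomogPoly 𝕜 m q) (ξ : X) :
    ‖q ξ‖ ≤ polyNorm q * ‖ξ‖ ^ m := by
  have hball {u : X} (hu : ‖u‖ ≤ 1) : ‖q u‖ ≤ polyNorm q := by
    obtain ⟨T, hT⟩ := hq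
    refine le_ciSup (f := fun u : {u : X // ‖u‖ ≤ 1} => ‖q u.1‖) ⟨‖T‖, ?_⟩ ⟨u, hu⟩
    rintro _ ⟨v, rfl⟩
    simp only [hT]
    refine (T.le_opNorm _).trans (mul_le_of_le_one_right (norm_nonneg _) ?_)
    exact prod_le_one (fun _ _ => norm_nonneg _) fun _ _ => v.2
  rcases eq_or_ne ξ 0 with rfl | hξ
  · rcases m with _ | m
    · simpa using hball (norm_zero.le.trans zero_le_one)
    · have h0 := hq.map_smul_s8 0 0
      rw [zero_smul, zero_pow m.succ_ne_zero, zero_smul] at h0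
      simp [h0]
  · have hn : 0 < ‖ξ‖ := norm_pos_iff.2 hξ
    have hu : ‖((‖ξ‖⁻¹ : ℝ) : 𝕜) • ξ‖ ≤ 1 := by
      rw [norm_smul, RCLike.norm_ofReal, abs_inv, abs_norm, inv_mul_cancel₀ hn.ne']
    have hξu : ξ = ((‖ξ‖ : ℝ) : 𝕜) • ((‖ξ‖⁻¹ : ℝ) : 𝕜) • ξ := by
      rw [smul_smul, ← RCLike.ofReal_mul, mul_inv_cancel₀ hn.ne', RCLike.ofReal_one, one_smul]
    rw [hξu, hq.map_smul_s8, norm_smul, norm_pow, RCLike.norm_ofReal, abs_norm, mul_comm, ← hξu]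
    exact mul_le_mul_of_nonneg_right (hball hu) (by positivity)

lemma sum_norm_sum_smul_le_iSup {J I : Type*} [Fintype J] [Fintype I] (x : J → I → X)
    (lam : J → I → 𝕜) {q : X → 𝕜} (hq : IsHomogPoly 𝕜 m q) (hq1 : polyNorm q ≤ 1) :
    ∑ j, ‖∑ i, lam j i • q (x j i)‖ ≤
      ⨆ q : {q : X → 𝕜 // IsHomogPoly 𝕜 m q ∧ polyNorm q ≤ 1},
        ∑ j, ‖∑ i, lam j i • q.1 (x j i)‖ := by
  refine le_ciSup (f := fun q : {q : X → 𝕜 // IsHomogPoly 𝕜 m q ∧ polyNorm q ≤ 1} =>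
    ∑ j, ‖∑ i, lam j i • q.1 (x j i)‖) ⟨∑ j, ∑ i, ‖lam j i‖ * ‖x j i‖ ^ m, ?_⟩ ⟨q, hq, hq1⟩
  rintro _ ⟨⟨q', hq', hq'1⟩, rfl⟩
  refine sum_le_sum fun j _ => (norm_sum_le _ _).trans (sum_le_sum fun i _ => ?_)
  rw [norm_smul]
  refine mul_le_mul_of_nonneg_left ((hq'.norm_le_polyNorm_mul_pow _).trans ?_) (norm_nonneg _)
  exact mul_le_of_le_one_left (by positivity) hq'1

end HomogeneousPolynomial

section EllOne

open RCLike Filter Topology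

variable {𝕜 : Type*} [RCLike 𝕜] {m N : ℕ}

local notation "ℓ¹" => lp (fun _ : ℕ => 𝕜) 1

noncomputable def monomialForm (b : (Fin m → Fin N) → 𝕜) :
    ContinuousMultilinearMap 𝕜 (fun _ : Fin m => ℓ¹) 𝕜 :=
  ∑ k, b k • (ContinuousMultilinearMap.mkPiAlgebra 𝕜 (Fin m) 𝕜).compContinuousLinearMap
    fun l => lp.evalCLM 𝕜 (fun _ : ℕ => 𝕜) 1 (k l : ℕ)

lemma monomialForm_apply (b : (Fin m → Fin N) → 𝕜) (ξ : Fin m → ℓ¹) :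
    monomialForm b ξ = ∑ k, b k * ∏ l, ξ l (k l) := by
  simp [monomialForm, lp.evalCLM]

lemma sum_norm_apply_le_norm (ξ : ℓ¹) (s : Finset ℕ) : ∑ a ∈ s, ‖ξ a‖ ≤ ‖ξ‖ := by
  simpa using lp.sum_rpow_le_norm_rpow (by simp) ξ s

lemma polyNorm_monomialForm_le_one {b : (Fin m → Fin N) → 𝕜} (hb : ∀ k, ‖b k‖ ≤ 1) :
    polyNorm (fun ξ : ℓ¹ => monomialForm b fun _ => ξ) ≤ 1 := by
  have : Nonempty {ξ : ℓ¹ // ‖ξ‖ ≤ 1} := ⟨⟨0, by simp⟩⟩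
  refine ciSup_le fun ξ => ?_
  change ‖monomialForm b fun _ => ξ.1‖ ≤ 1
  rw [monomialForm_apply]
  calc ‖∑ k, b k * ∏ l, ξ.1 (k l)‖ ≤ ∑ k : Fin m → Fin N, ∏ l, ‖ξ.1 (k l)‖ :=
        (norm_sum_le _ _).trans <| sum_le_sum fun k _ => by
          rw [norm_mul, norm_prod]
          exact mul_le_of_le_one_left (prod_nonneg fun _ _ => norm_nonneg _) (hb k)
    _ = (∑ a : Fin N, ‖ξ.1 a‖) ^ m := (Fintype.sum_pow (fun a : Fin N => ‖ξ.1 a‖) m).symm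
    _ ≤ 1 := by
        refine pow_le_one₀ (sum_nonneg fun _ _ => norm_nonneg _) ?_
        rw [Fin.sum_univ_eq_sum_range (fun a => ‖ξ.1 a‖)]
        exact (sum_norm_apply_le_norm _ _).trans ξ.2

noncomputable def truncation (N : ℕ) (ξ : ℓ¹) : ℓ¹ := ∑ a : Fin N, lp.single 1 (a : ℕ) (ξ a)

lemma tendsto_truncation (ξ : ℓ¹) : Tendsto (truncation · ξ) atTop (𝓝 ξ) := by
  simpa only [truncation, Fin.sum_univ_eq_sum_range fun a => lp.single 1 a (ξ a)] using
    (lp.hasSum_single ENNReal.one_ne_top ξ).tendsto_sum_nat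

lemma apply_truncation_eq_sum {Y : Type*} [NormedAddCommGroup Y] [NormedSpace 𝕜 Y]
    (T : ContinuousMultilinearMap 𝕜 (fun _ : Fin m => ℓ¹) Y) (ξ : ℓ¹) :
    T (fun _ => truncation N ξ) =
      ∑ k : Fin m → Fin N, (∏ l, ξ (k l)) • T fun l => lp.single 1 (k l : ℕ) 1 := by
  rw [truncation, T.map_sum]
  refine sum_congr rfl fun k _ => ?_
  rw [← T.map_smul_univ]
  congr 1
  funext l
  rw [← lp.single_smul, smul_eq_mul, mul_one]

lemma norm_apply_single_le {Y : Type*} [NormedAddCommGroup Y] [NormedSpace 𝕜 Y]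
    (T : ContinuousMultilinearMap 𝕜 (fun _ : Fin m => ℓ¹) Y) (k : Fin m → ℕ) :
    ‖T fun l => lp.single 1 (k l) (1 : 𝕜)‖ ≤ ‖T‖ := by
  simpa [lp.norm_single] using T.le_opNorm fun l => lp.single 1 (k l) (1 : 𝕜)

theorem sum_norm_sum_smul_apply_truncation_le {E : Type*} [NormedAddCommGroup E]
    [InnerProductSpace 𝕜 E] (T : ContinuousMultilinearMap 𝕜 (fun _ : Fin m => ℓ¹) E)
    {J I : Type*} [Fintype J] [Fintype I] (x : J → I → ℓ¹) (lam : J → I → 𝕜) {S : ℝ}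
    (hS : ∀ q : ℓ¹ → 𝕜, IsHomogPoly 𝕜 m q → polyNorm q ≤ 1 →
      ∑ j, ‖∑ i, lam j i • q (x j i)‖ ≤ S) (N : ℕ) :
    ∑ j, ‖∑ i, lam j i • T (fun _ => truncation N (x j i))‖ ≤ 196 * ‖T‖ * S := by
  set z : J → (Fin m → Fin N) → 𝕜 := fun j k => ∑ i, lam j i * ∏ l, x j i (k l)
  have hexpand (j : J) : ∑ i, lam j i • T (fun _ => truncation N (x j i)) =
      ∑ k, z j k • T fun l => lp.single 1 (k l : ℕ) 1 := by
    simp only [apply_truncation_eq_sum, smul_sum, smul_smul, z, sum_smul]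
    exact sum_comm
  have hz (b : (Fin m → Fin N) → 𝕜) (hb : ∀ k, ‖b k‖ ≤ 1) :
      ∑ j, ‖∑ k, z j k * b k‖ ≤ S := by
    convert hS _ ⟨monomialForm b, fun _ => rfl⟩ (polyNorm_monomialForm_le_one hb) using 3
    simp only [monomialForm_apply, z, sum_mul, mul_sum, smul_eq_mul]
    rw [sum_comm]
    exact sum_congr rfl fun i _ => sum_congr rfl fun k _ => by ring
  simp only [hexpand]
  exact sum_norm_sum_smul_le hz (norm_nonneg T) fun k => norm_apply_single_le T _

lemma tendsto_sum_norm_sum_smul_apply_truncation {Y : Type*} [NormedAddCommGroup Y]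
    [NormedSpace 𝕜 Y] (T : ContinuousMultilinearMap 𝕜 (fun _ : Fin m => ℓ¹) Y)
    {J I : Type*} [Fintype J] [Fintype I] (x : J → I → ℓ¹) (lam : J → I → 𝕜) :
    Tendsto (fun N => ∑ j, ‖∑ i, lam j i • T (fun _ => truncation N (x j i))‖) atTop
      (𝓝 (∑ j, ‖∑ i, lam j i • T fun _ => x j i‖)) := by
  have hT : Continuous fun ξ : ℓ¹ => T fun _ => ξ :=
    T.cont.comp (continuous_pi fun _ => continuous_id)
  exact tendsto_finsetSum _ fun j _ => Tendsto.norm <| tendsto_finsetSum _ fun i _ =>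
    ((hT.tendsto _).comp (tendsto_truncation _)).const_smul _

end EllOne

theorem grothendieck_factStronglySummingPoly_general
    {𝕜 : Type*} [RCLike 𝕜] (m : ℕ)
    (P : lp (fun _ : ℕ => 𝕜) 1 → lp (fun _ : ℕ => 𝕜) 2) (hP : IsHomogPoly 𝕜 m P) :
    FactStronglySummingPoly 𝕜 m 1 P := by
  obtain ⟨T, hT⟩ := hP
  refine ⟨⟨T, hT⟩, 196 * ‖T‖, by positivity, fun m₁ m₂ x lam => ?_⟩
  simp only [Real.rpow_one, div_one, hT]
  exact le_of_tendsto' (tendsto_sum_norm_sum_smul_apply_truncation T x lam) <|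
    sum_norm_sum_smul_apply_truncation_le T x lam fun q hq hq1 =>
      sum_norm_sum_smul_le_iSup x lam hq hq1

/-- Grothendieck type theorem: every continuous `m`-homogeneous
polynomial `P : ℓ₁ → ℓ₂` is factorable strongly `1`-summing. -/
theorem grothendieck_factStronglySummingPoly
    {𝕜 : Type*} [RCLike 𝕜] (m : ℕ) (hm : 1 ≤ m)
    (P : lp (fun _ : ℕ => 𝕜) 1 → lp (fun _ : ℕ => 𝕜) 2) (hP : IsHomogPoly 𝕜 m P) :
    FactStronglySummingPoly 𝕜 m 1 P :=
  grothendieck_factStronglySummingPoly_general m P hP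
end

section
/- Let 1 ≤ p < ∞ and let X_1, …, X_n, Y be Banach spaces with each X_k nonzero. If every continuous n-linear operator T : X_1 × ⋯ × X_n → Y is factorable strongly p-summing, then for every j = 1, …, n, every continuous linear operator u : X_j → Y is absolutely p-summing. -/
open scoped BigOperators
open MeasureTheory

/-!
Pick `a k` with `‖a k‖ ≤ 1` and functionals `g k` with `g k (a k) = 1`. Then
`T x = (∏ k ≠ j, g k (x k)) • u (x j)` is a continuous multilinear map whose restriction
`v ↦ T (update a j v)` to the `j`-th slot through `a` is `u`. Restricting a multilinear
functional of norm `≤ 1` through `a` in the same way gives a linear functional of norm `≤ 1`,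
so the factorable strongly `p`-summing inequality for `T`, used with a single summand
(`m₂ = 1`) per row, is the absolutely `p`-summing inequality for `u`, with the same constant.
-/

open Function

theorem exists_norm_le_one_dual_apply_eq_one {𝕜 E : Type*} [RCLike 𝕜] [NormedAddCommGroup E]
    [NormedSpace 𝕜 E] [Nontrivial E] : ∃ (a : E) (g : StrongDual 𝕜 E), ‖a‖ ≤ 1 ∧ g a = 1 := by
  obtain ⟨x, hx⟩ := exists_ne (0 : E)
  obtain ⟨g, -, hgx⟩ := exists_dual_vector' 𝕜 x
  refine ⟨(‖x‖⁻¹ : 𝕜) • x, g, (norm_smul_inv_norm hx).le, ?_⟩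
  rw [map_smul, hgx, smul_eq_mul, inv_mul_cancel₀ (by simpa using hx)]

namespace ContinuousMultilinearMap

variable {𝕜 ι : Type*} [RCLike 𝕜] [DecidableEq ι] {E : ι → Type*} {G : Type*}
  [∀ k, NormedAddCommGroup (E k)] [∀ k, NormedSpace 𝕜 (E k)]
  [NormedAddCommGroup G] [NormedSpace 𝕜 G]

theorem norm_toContinuousLinearMap_le_of_norm_le_one [Fintype ι]
    (f : ContinuousMultilinearMap 𝕜 E G) {a : ∀ k, E k} (ha : ∀ k, ‖a k‖ ≤ 1) (j : ι) :
    ‖f.toContinuousLinearMap a j‖ ≤ ‖f‖ :=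
  ContinuousLinearMap.opNorm_le_bound _ f.opNorm_nonneg fun v => by
    simpa [Finset.prod_update_of_mem] using
      f.le_opNorm_mul_prod_of_le (m := update a j v) (b := update 1 j ‖v‖) fun k => by
        rcases eq_or_ne k j with rfl | hk
        · simp
        · simpa [hk] using ha k

def smulUpdate (f : ContinuousMultilinearMap 𝕜 E 𝕜) (j : ι) (c : E j) (u : E j →L[𝕜] G) :
    ContinuousMultilinearMap 𝕜 E G where
  toMultilinearMap := MultilinearMap.mk' (fun x => f (update x j c) • u (x j))
    (fun m i x y => by
      rcases eq_or_ne i j with rfl | hij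
      · simp [smul_add]
      · simp [update_comm hij, update_of_ne hij.symm, add_smul])
    (fun m i r x => by
      rcases eq_or_ne i j with rfl | hij
      · simp [smul_comm r]
      · simp [update_comm hij, update_of_ne hij.symm, mul_smul])
  cont := (f.cont.comp (continuous_id.update j continuous_const)).smul
    (u.continuous.comp (continuous_apply j))

@[simp]
theorem smulUpdate_apply (f : ContinuousMultilinearMap 𝕜 E 𝕜) (j : ι) (c : E j)
    (u : E j →L[𝕜] G) (x : ∀ k, E k) : f.smulUpdate j c u x = f (update x j c) • u (x j) :=
  rfl

theorem toContinuousLinearMap_smulUpdate (f : ContinuousMultilinearMap 𝕜 E 𝕜) (a : ∀ k, E k)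
    (j : ι) (u : E j →L[𝕜] G) : (f.smulUpdate j (a j) u).toContinuousLinearMap a j = f a • u := by
  ext v
  simp

theorem exists_toContinuousLinearMap_eq [Fintype ι] [∀ k, Nontrivial (E k)] (j : ι)
    (u : E j →L[𝕜] G) :
    ∃ (T : ContinuousMultilinearMap 𝕜 E G) (a : ∀ k, E k),
      (∀ k, ‖a k‖ ≤ 1) ∧ T.toContinuousLinearMap a j = u := by
  choose a g ha hga using fun k => exists_norm_le_one_dual_apply_eq_one (𝕜 := 𝕜) (E := E k)
  let f := (ContinuousMultilinearMap.mkPiAlgebra 𝕜 ι 𝕜).compContinuousLinearMap g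
  have hfa : f a = 1 := by simp [f, hga]
  exact ⟨f.smulUpdate j (a j) u, a, ha, by rw [toContinuousLinearMap_smulUpdate, hfa, one_smul]⟩

end ContinuousMultilinearMap

theorem bddAbove_range_sum_norm_dual_apply_rpow {𝕜 E : Type*} [RCLike 𝕜] [NormedAddCommGroup E]
    [NormedSpace 𝕜 E] {p : ℝ} (hp : 0 ≤ p) {m : ℕ} (x : Fin m → E) :
    BddAbove (Set.range fun φ : {φ : E →L[𝕜] 𝕜 // ‖φ‖ ≤ 1} =>
      (∑ j, ‖φ.1 (x j)‖ ^ p) ^ (1 / p)) := by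
  refine ⟨(∑ j, ‖x j‖ ^ p) ^ (1 / p), ?_⟩
  rintro _ ⟨φ, rfl⟩
  refine Real.rpow_le_rpow (by positivity) (Finset.sum_le_sum fun j _ => ?_) (one_div_nonneg.2 hp)
  exact Real.rpow_le_rpow (norm_nonneg _)
    ((φ.1.le_of_opNorm_le φ.2 (x j)).trans_eq (one_mul _)) hp

theorem FactStronglySummingBound.absSummingBound_toContinuousLinearMap {𝕜 : Type*} [RCLike 𝕜]
    {n : ℕ} {X : Fin n → Type*} {Y : Type*}
    [∀ k, NormedAddCommGroup (X k)] [∀ k, NormedSpace 𝕜 (X k)]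
    [NormedAddCommGroup Y] [NormedSpace 𝕜 Y] {p C : ℝ} (hp : 0 ≤ p)
    {T : ContinuousMultilinearMap 𝕜 X Y} (hT : FactStronglySummingBound 𝕜 p T C)
    {a : ∀ k, X k} (ha : ∀ k, ‖a k‖ ≤ 1) (j : Fin n) :
    AbsSummingBound 𝕜 p (T.toContinuousLinearMap a j) C := by
  refine ⟨hT.1, fun m x => ?_⟩
  have hT' := hT.2 m 1 (fun j' _ => update a j (x j')) (fun _ _ => 1)
  simp only [Finset.univ_unique, Finset.sum_singleton, one_smul] at hT'
  refine hT'.trans (mul_le_mul_of_nonneg_left ?_ hT.1)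
  have : Nonempty {φ : ContinuousMultilinearMap 𝕜 X 𝕜 // ‖φ‖ ≤ 1} := ⟨⟨0, by simp⟩⟩
  exact ciSup_le fun φ => le_ciSup_of_le (bddAbove_range_sum_norm_dual_apply_rpow hp x)
    ⟨φ.1.toContinuousLinearMap a j,
      (φ.1.norm_toContinuousLinearMap_le_of_norm_le_one ha j).trans φ.2⟩ le_rfl

theorem linear_absSumming_of_factStronglySumming_coincidence_general
    {𝕜 : Type*} [RCLike 𝕜] {n : ℕ} {X : Fin n → Type*} {Y : Type*}
    [∀ k, NormedAddCommGroup (X k)] [∀ k, NormedSpace 𝕜 (X k)]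
    [∀ k, Nontrivial (X k)]
    [NormedAddCommGroup Y] [NormedSpace 𝕜 Y]
    (p : ℝ) (hp : 1 ≤ p)
    (h : ∀ T : ContinuousMultilinearMap 𝕜 X Y, FactStronglySumming 𝕜 p T) :
    ∀ (j : Fin n) (u : X j →L[𝕜] Y), AbsolutelySumming 𝕜 p u := by
  intro j u
  obtain ⟨T, a, ha, rfl⟩ := ContinuousMultilinearMap.exists_toContinuousLinearMap_eq j u
  obtain ⟨C, hC⟩ := h T
  exact ⟨C, hC.absSummingBound_toContinuousLinearMap (zero_le_one.trans hp) ha j⟩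

/-- if every continuous `n`-linear operator `T : X 1 × ⋯ × X n → Y` is
factorable strongly `p`-summing (the `X k` being nonzero Banach spaces), then for every
`j` every continuous linear operator `u : X j → Y` is absolutely `p`-summing. -/
theorem linear_absSumming_of_factStronglySumming_coincidence
    {𝕜 : Type*} [RCLike 𝕜] {n : ℕ} {X : Fin n → Type*} {Y : Type*}
    [∀ k, NormedAddCommGroup (X k)] [∀ k, NormedSpace 𝕜 (X k)] [∀ k, CompleteSpace (X k)]
    [∀ k, Nontrivial (X k)]
    [NormedAddCommGroup Y] [NormedSpace 𝕜 Y] [CompleteSpace Y]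
    (p : ℝ) (hp : 1 ≤ p)
    (h : ∀ T : ContinuousMultilinearMap 𝕜 X Y, FactStronglySumming 𝕜 p T) :
    ∀ (j : Fin n) (u : X j →L[𝕜] Y), AbsolutelySumming 𝕜 p u :=
  linear_absSumming_of_factStronglySumming_coincidence_general p hp h
end

section
/- Let 1 ≤ p < ∞, let n be a positive integer and let X, Y be Banach spaces. If every continuous n-homogeneous polynomial P : X → Y is factorable strongly p-summing, then every continuous linear operator u : X → Y is absolutely p-summing. -/
open scoped BigOperators
open MeasureTheory

/-! Fix `a` and a functional `φ` with `φ a = 1`, and consider the `n`-homogeneous polynomial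
`P z = φ z ^ (n - 1) • u z`. Choosing `c` with `∑ᵢ cᵢ iᵏ = δ_{k1}` for `k ≤ n`, the combination
`∑ᵢ cᵢ P (a + i z)` picks out the linear term of `t ↦ P (a + t z)`, namely
`u z + (n - 1) φ z • u a`. For a scalar polynomial `q` of norm `≤ 1` the same combination
`z ↦ ∑ᵢ cᵢ q (a + i z)` is a linear functional whose norm is bounded independently of `q`. So the
factorable strongly summing inequality for `P`, applied to the points `a + i xⱼ` with weights `cᵢ`,
bounds the `ℓ_p` norm of `(u xⱼ + (n - 1) φ xⱼ • u a)ⱼ` by a multiple of the weak `ℓ_p` norm of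
`(xⱼ)`, and the rank-one correction is dominated in the same way. -/

open Finset

theorem exists_sum_mul_natCast_pow_eq_ite (K : Type*) [Field K] [CharZero K] (n : ℕ) :
    ∃ c : Fin (n + 1) → K, ∀ k ≤ n, ∑ i, c i * ((i : ℕ) : K) ^ k = if k = 1 then 1 else 0 := by
  set M := Matrix.vandermonde fun i : Fin (n + 1) => ((i : ℕ) : K)
  have hM : IsUnit M.det := by
    rw [isUnit_iff_ne_zero, Matrix.det_vandermonde_ne_zero_iff]
    intro i j h
    exact Fin.ext (Nat.cast_injective h)
  set e : Fin (n + 1) → K := fun k => if (k : ℕ) = 1 then 1 else 0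
  refine ⟨Matrix.vecMul e M⁻¹, fun k hk => ?_⟩
  have h := congrFun (show Matrix.vecMul (Matrix.vecMul e M⁻¹) M = e by
    rw [Matrix.vecMul_vecMul, Matrix.nonsing_inv_mul M hM, Matrix.vecMul_one]) ⟨k, by omega⟩
  simpa [Matrix.vecMul, dotProduct, M, Matrix.vandermonde_apply, e] using h

theorem MultilinearMap.map_const_add_smul {R M N : Type*} [CommSemiring R] [AddCommMonoid M]
    [Module R M] [AddCommMonoid N] [Module R N] {n : ℕ}
    (f : MultilinearMap R (fun _ : Fin n => M) N) (a x : M) (s : R) :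
    f (fun _ => a + s • x) =
      ∑ A : Finset (Fin n), s ^ #A • f (A.piecewise (fun _ => x) (fun _ => a)) := by
  classical
  rw [show (fun _ : Fin n => a + s • x) = (fun _ => s • x) + fun _ => a from
    funext fun _ => add_comm _ _, f.map_add_univ]
  refine sum_congr rfl fun A _ => ?_
  rw [← prod_const, ← f.map_piecewise_smul]
  congr 1
  ext i
  by_cases hi : i ∈ A <;> simp [hi]

theorem MultilinearMap.sum_smul_map_const_add_smul {R M N ι : Type*} [CommSemiring R]
    [AddCommMonoid M] [Module R M] [AddCommMonoid N] [Module R N] [Fintype ι] {n : ℕ}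
    (f : MultilinearMap R (fun _ : Fin n => M) N) {c t : ι → R}
    (hct : ∀ k ≤ n, ∑ i, c i * t i ^ k = if k = 1 then 1 else 0) (a x : M) :
    ∑ i, c i • f (fun _ => a + t i • x) = ∑ k, f (Function.update (fun _ => a) k x) := by
  classical
  simp_rw [f.map_const_add_smul, smul_sum, smul_smul]
  rw [sum_comm]
  have hcard (A : Finset (Fin n)) : #A ≤ n := (card_le_univ A).trans_eq (Fintype.card_fin n)
  simp_rw [← sum_smul, hct _ (hcard _), ite_smul, one_smul, zero_smul]
  rw [← sum_filter, show univ.filter (fun A : Finset (Fin n) => #A = 1) = powersetCard 1 univ by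
    ext; simp, powersetCard_one, sum_map]
  simp [piecewise_singleton]

section HomogPoly

variable {𝕜 X Z : Type*} [RCLike 𝕜] [NormedAddCommGroup X] [NormedSpace 𝕜 X]
  [NormedAddCommGroup Z] [NormedSpace 𝕜 Z] {n : ℕ} {q : X → Z}

theorem IsHomogPoly.bddAbove_norm_ball (hq : IsHomogPoly 𝕜 n q) :
    BddAbove (Set.range fun x : {x : X // ‖x‖ ≤ 1} => ‖q x.1‖) := by
  obtain ⟨S, hS⟩ := hq
  refine ⟨‖S‖, Set.forall_mem_range.2 fun x => ?_⟩
  calc ‖q x.1‖ ≤ ‖S‖ * ∏ _i : Fin n, ‖x.1‖ := hS x.1 ▸ S.le_opNorm _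
    _ ≤ ‖S‖ := mul_le_of_le_one_right (norm_nonneg _)
        (prod_le_one (fun _ _ => norm_nonneg _) fun _ _ => x.2)

theorem IsHomogPoly.norm_apply_le_s16 (hq : IsHomogPoly 𝕜 n q) (y : X) :
    ‖q y‖ ≤ polyNorm q * ‖y‖ ^ n := by
  obtain ⟨S, hS⟩ := id hq
  set z : X := (‖y‖ : 𝕜)⁻¹ • y
  have hyz : ((‖y‖ : ℝ) : 𝕜) • z = y := by
    rcases eq_or_ne y 0 with rfl | hy
    · simp
    · exact smul_inv_smul₀ (by simpa using hy) y
  have hz : ‖z‖ ≤ 1 := by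
    rcases eq_or_ne y 0 with rfl | hy
    · simp [z]
    · exact (norm_smul_inv_norm hy).le
  have hqz : ‖q z‖ ≤ polyNorm q := le_ciSup hq.bddAbove_norm_ball ⟨z, hz⟩
  calc ‖q y‖ = ‖q ((‖y‖ : 𝕜) • z)‖ := by rw [hyz]
    _ = ‖y‖ ^ n * ‖q z‖ := by
        rw [hS, hS, S.map_smul_univ (fun _ => _) (fun _ => z)]
        simp [norm_smul]
    _ ≤ polyNorm q * ‖y‖ ^ n := by
        rw [mul_comm]; exact mul_le_mul_of_nonneg_right hqz (by positivity)

theorem polyNorm_nonneg_s16 (q : X → Z) : 0 ≤ polyNorm q :=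
  Real.iSup_nonneg fun _ => norm_nonneg _

theorem IsHomogPoly.exists_clm_eq_sum_smul (hq : IsHomogPoly 𝕜 n q) {ι : Type*} [Fintype ι]
    {c t : ι → 𝕜} (hct : ∀ k ≤ n, ∑ i, c i * t i ^ k = if k = 1 then 1 else 0) (a : X) :
    ∃ ψ : X →L[𝕜] Z, (∀ z, ψ z = ∑ i, c i • q (a + t i • z)) ∧
      ‖ψ‖ ≤ polyNorm q * ∑ i, ‖c i‖ * (‖a‖ + ‖t i‖) ^ n := by
  classical
  obtain ⟨S, hS⟩ := id hq
  set ψ := (S.linearDeriv fun _ => a).comp (ContinuousLinearMap.pi fun _ => .id 𝕜 X)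
  have hψ (z : X) : ψ z = ∑ i, c i • q (a + t i • z) := calc
    ψ z = ∑ k, S (Function.update (fun _ => a) k z) := by simp [ψ]
    _ = ∑ i, c i • S (fun _ => a + t i • z) :=
      (S.toMultilinearMap.sum_smul_map_const_add_smul hct a z).symm
    _ = ∑ i, c i • q (a + t i • z) := by simp only [hS]
  refine ⟨ψ, hψ, ψ.opNorm_le_of_unit_norm
    (mul_nonneg (polyNorm_nonneg_s16 q) (by positivity)) fun z hz => ?_⟩
  rw [hψ, mul_sum]
  refine (norm_sum_le _ _).trans (sum_le_sum fun i _ => ?_)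
  have hai : ‖a + t i • z‖ ≤ ‖a‖ + ‖t i‖ := by
    simpa [norm_smul, hz] using norm_add_le a (t i • z)
  rw [norm_smul, mul_left_comm]
  gcongr
  exact (hq.norm_apply_le_s16 _).trans (by gcongr; exact polyNorm_nonneg_s16 q)

end HomogPoly

section Lp

variable {ι E F : Type*} [Fintype ι] [SeminormedAddCommGroup E] [SeminormedAddCommGroup F]
  {p : ℝ}

theorem rpow_sum_norm_rpow_eq_mul_of_norm_eq (hp : 0 < p) {f : ι → E} {g : ι → F} {r : ℝ}
    (hr : 0 ≤ r) (hfg : ∀ j, ‖g j‖ = r * ‖f j‖) :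
    (∑ j, ‖g j‖ ^ p) ^ (1 / p) = r * (∑ j, ‖f j‖ ^ p) ^ (1 / p) := by
  simp_rw [hfg, Real.mul_rpow hr (norm_nonneg _), ← mul_sum]
  rw [Real.mul_rpow (by positivity) (by positivity), ← Real.rpow_mul hr,
    mul_one_div_cancel hp.ne', Real.rpow_one]

theorem rpow_sum_norm_sub_rpow_le (hp : 1 ≤ p) (f g : ι → E) :
    (∑ j, ‖f j - g j‖ ^ p) ^ (1 / p) ≤
      (∑ j, ‖f j‖ ^ p) ^ (1 / p) + (∑ j, ‖g j‖ ^ p) ^ (1 / p) := by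
  have hp0 : 0 < p := by linarith
  calc (∑ j, ‖f j - g j‖ ^ p) ^ (1 / p) ≤ (∑ j, (‖f j‖ + ‖g j‖) ^ p) ^ (1 / p) := by
        gcongr with j; exact norm_sub_le _ _
    _ ≤ _ := Real.Lp_add_le_of_nonneg _ hp (fun _ _ => norm_nonneg _) fun _ _ => norm_nonneg _

end Lp

section WeakLp

variable {𝕜 X : Type*} [RCLike 𝕜] [NormedAddCommGroup X] [NormedSpace 𝕜 X] {p : ℝ} {m : ℕ}

theorem bddAbove_rpow_sum_norm_dual_rpow (hp : 0 < p) (x : Fin m → X) :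
    BddAbove (Set.range fun φ : {φ : X →L[𝕜] 𝕜 // ‖φ‖ ≤ 1} =>
      (∑ j, ‖φ.1 (x j)‖ ^ p) ^ (1 / p)) := by
  refine ⟨(∑ j, ‖x j‖ ^ p) ^ (1 / p), Set.forall_mem_range.2 fun φ => ?_⟩
  gcongr with j
  exact (φ.1.le_of_opNorm_le φ.2 _).trans_eq (one_mul _)

theorem rpow_sum_norm_apply_rpow_le (hp : 0 < p) (ψ : X →L[𝕜] 𝕜) (x : Fin m → X) :
    (∑ j, ‖ψ (x j)‖ ^ p) ^ (1 / p) ≤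
      ‖ψ‖ * ⨆ φ : {φ : X →L[𝕜] 𝕜 // ‖φ‖ ≤ 1}, (∑ j, ‖φ.1 (x j)‖ ^ p) ^ (1 / p) := by
  set φ : X →L[𝕜] 𝕜 := (‖ψ‖ : 𝕜)⁻¹ • ψ
  have hφ : ‖φ‖ ≤ 1 := (norm_smul_le ((‖ψ‖ : 𝕜)⁻¹) ψ).trans <| by
    rw [norm_inv, RCLike.norm_ofReal, abs_norm]
    exact inv_mul_le_one_of_le₀ le_rfl (norm_nonneg _)
  have hψφ (z : X) : ‖ψ z‖ = ‖ψ‖ * ‖φ z‖ := by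
    rcases eq_or_ne ψ 0 with rfl | hψ
    · simp
    · simp [φ, hψ]
  rw [rpow_sum_norm_rpow_eq_mul_of_norm_eq hp (norm_nonneg ψ) fun j => hψφ (x j)]
  gcongr
  exact le_ciSup (bddAbove_rpow_sum_norm_dual_rpow hp x) ⟨φ, hφ⟩

theorem rpow_sum_norm_apply_smul_rpow_le {Y : Type*} [NormedAddCommGroup Y] [NormedSpace 𝕜 Y]
    (hp : 0 < p) (ψ : X →L[𝕜] 𝕜) (y : Y) (x : Fin m → X) :
    (∑ j, ‖ψ (x j) • y‖ ^ p) ^ (1 / p) ≤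
      ‖y‖ * (‖ψ‖ * ⨆ φ : {φ : X →L[𝕜] 𝕜 // ‖φ‖ ≤ 1}, (∑ j, ‖φ.1 (x j)‖ ^ p) ^ (1 / p)) := by
  rw [rpow_sum_norm_rpow_eq_mul_of_norm_eq hp (norm_nonneg y) fun j =>
    (norm_smul _ _).trans (mul_comm _ _)]
  exact mul_le_mul_of_nonneg_left (rpow_sum_norm_apply_rpow_le hp ψ x) (norm_nonneg y)

end WeakLp

section DualPowSmul

variable {𝕜 X Y : Type*} [RCLike 𝕜] [NormedAddCommGroup X] [NormedSpace 𝕜 X]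
  [NormedAddCommGroup Y] [NormedSpace 𝕜 Y] {m : ℕ} (φ : X →L[𝕜] 𝕜) (u : X →L[𝕜] Y)

/-- A non-symmetric `(m + 1)`-linear map whose diagonal is `z ↦ φ z ^ m • u z`. -/
noncomputable def dualPowSmul (m : ℕ) : ContinuousMultilinearMap 𝕜 (fun _ : Fin (m + 1) => X) Y :=
  ContinuousLinearMap.uncurryLeft
    ((ContinuousMultilinearMap.smulRightL 𝕜 (fun _ : Fin m => X) Y
      ((ContinuousMultilinearMap.mkPiAlgebra 𝕜 (Fin m) 𝕜).compContinuousLinearMap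
        fun _ => φ)).comp u)

theorem dualPowSmul_apply (v : Fin (m + 1) → X) :
    dualPowSmul φ u m v = (∏ i : Fin m, φ (v i.succ)) • u (v 0) := by
  simp [dualPowSmul, ContinuousLinearMap.uncurryLeft_apply, Fin.tail]

theorem sum_smul_dualPowSmul_const_add_smul {a : X} (ha : φ a = 1) {ι : Type*} [Fintype ι]
    {c t : ι → 𝕜} (hct : ∀ k ≤ m + 1, ∑ i, c i * t i ^ k = if k = 1 then 1 else 0) (z : X) :
    ∑ i, c i • dualPowSmul φ u m (fun _ => a + t i • z) = u z + φ z • ((m : 𝕜) • u a) := by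
  refine ((dualPowSmul φ u m).toMultilinearMap.sum_smul_map_const_add_smul hct a z).trans ?_
  rw [Fin.sum_univ_succ]
  simp [dualPowSmul_apply, Function.update_apply, apply_ite φ, ha, (Fin.succ_ne_zero _).symm,
    Nat.cast_smul_eq_nsmul, smul_comm (m : ℕ)]

end DualPowSmul

theorem FactStronglySummingPolyBound.rpow_sum_norm_sum_smul_le {𝕜 X Y : Type*} [RCLike 𝕜]
    [NormedAddCommGroup X] [NormedSpace 𝕜 X] [NormedAddCommGroup Y] [NormedSpace 𝕜 Y]
    {n : ℕ} {p C : ℝ} {P : X → Y} (hP : FactStronglySummingPolyBound 𝕜 n p P C) (hp : 0 < p)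
    {k : ℕ} {c t : Fin k → 𝕜} (hct : ∀ l ≤ n, ∑ i, c i * t i ^ l = if l = 1 then 1 else 0)
    (a : X) {m : ℕ} (x : Fin m → X) :
    (∑ j, ‖∑ i, c i • P (a + t i • x j)‖ ^ p) ^ (1 / p) ≤
      C * ((∑ i, ‖c i‖ * (‖a‖ + ‖t i‖) ^ n) *
        ⨆ φ : {φ : X →L[𝕜] 𝕜 // ‖φ‖ ≤ 1}, (∑ j, ‖φ.1 (x j)‖ ^ p) ^ (1 / p)) := by
  have hK : 0 ≤ ∑ i, ‖c i‖ * (‖a‖ + ‖t i‖) ^ n := by positivity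
  have hW : 0 ≤ ⨆ φ : {φ : X →L[𝕜] 𝕜 // ‖φ‖ ≤ 1}, (∑ j, ‖φ.1 (x j)‖ ^ p) ^ (1 / p) :=
    Real.iSup_nonneg fun _ => by positivity
  refine (hP.2 m k (fun j i => a + t i • x j) fun _ i => c i).trans
    (mul_le_mul_of_nonneg_left (Real.iSup_le (fun q => ?_) (mul_nonneg hK hW)) hP.1)
  obtain ⟨ψ, hψ, hψK⟩ := q.2.1.exists_clm_eq_sum_smul hct a
  simp_rw [← hψ]
  exact (rpow_sum_norm_apply_rpow_le hp ψ x).trans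
    (mul_le_mul_of_nonneg_right (hψK.trans (mul_le_of_le_one_left hK q.2.2)) hW)

theorem linear_absSumming_of_factStronglySummingPoly_coincidence_general
    {𝕜 : Type*} [RCLike 𝕜] {X Y : Type*}
    [NormedAddCommGroup X] [NormedSpace 𝕜 X]
    [NormedAddCommGroup Y] [NormedSpace 𝕜 Y]
    (n : ℕ) (hn : 0 < n) (p : ℝ) (hp : 1 ≤ p)
    (h : ∀ P : X → Y, IsHomogPoly 𝕜 n P → FactStronglySummingPoly 𝕜 n p P) :
    ∀ u : X →L[𝕜] Y, AbsolutelySumming 𝕜 p u := by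
  intro u
  have hp0 : 0 < p := by linarith
  rcases subsingleton_or_nontrivial X with hX | hX
  · refine ⟨0, le_rfl, fun m x => ?_⟩
    simp [Subsingleton.elim (x _) 0, Real.zero_rpow hp0.ne', Real.zero_rpow (inv_ne_zero hp0.ne')]
  obtain ⟨a, ha⟩ := exists_ne (0 : X)
  obtain ⟨φ, hφa⟩ := SeparatingDual.exists_eq_one (R := 𝕜) ha
  obtain ⟨m, rfl⟩ : ∃ m, n = m + 1 := ⟨n - 1, by omega⟩
  obtain ⟨c, hc⟩ := exists_sum_mul_natCast_pow_eq_ite 𝕜 (m + 1)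
  obtain ⟨-, C, hC⟩ := h _ ⟨dualPowSmul φ u m, fun _ => rfl⟩
  set y := (m : 𝕜) • u a
  set K := ∑ i : Fin (m + 2), ‖c i‖ * (‖a‖ + ‖((i : ℕ) : 𝕜)‖) ^ (m + 1)
  refine ⟨C * K + ‖y‖ * ‖φ‖, add_nonneg (mul_nonneg hC.1 (by positivity)) (by positivity),
    fun k x => ?_⟩
  set W := ⨆ ψ : {ψ : X →L[𝕜] 𝕜 // ‖ψ‖ ≤ 1}, (∑ j, ‖ψ.1 (x j)‖ ^ p) ^ (1 / p)
  have hw := hC.rpow_sum_norm_sum_smul_le hp0 hc a x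
  simp only [sum_smul_dualPowSmul_const_add_smul φ u hφa hc] at hw
  calc (∑ j, ‖u (x j)‖ ^ p) ^ (1 / p)
      = (∑ j, ‖(u (x j) + φ (x j) • y) - φ (x j) • y‖ ^ p) ^ (1 / p) := by simp
    _ ≤ C * (K * W) + ‖y‖ * (‖φ‖ * W) := (rpow_sum_norm_sub_rpow_le hp _ _).trans
        (add_le_add hw (rpow_sum_norm_apply_smul_rpow_le hp0 φ y x))
    _ = (C * K + ‖y‖ * ‖φ‖) * W := by ring

/-- if every continuous `n`-homogeneous polynomial `P : X → Y` is
factorable strongly `p`-summing, then every continuous linear operator `u : X → Y` is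
absolutely `p`-summing. -/
theorem linear_absSumming_of_factStronglySummingPoly_coincidence
    {𝕜 : Type*} [RCLike 𝕜] {X Y : Type*}
    [NormedAddCommGroup X] [NormedSpace 𝕜 X] [CompleteSpace X]
    [NormedAddCommGroup Y] [NormedSpace 𝕜 Y] [CompleteSpace Y]
    (n : ℕ) (hn : 0 < n) (p : ℝ) (hp : 1 ≤ p)
    (h : ∀ P : X → Y, IsHomogPoly 𝕜 n P → FactStronglySummingPoly 𝕜 n p P) :
    ∀ u : X →L[𝕜] Y, AbsolutelySumming 𝕜 p u :=
  linear_absSumming_of_factStronglySummingPoly_coincidence_general n hn p hp h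
end
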